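/- arXiv:0709.3283 — 10 statements merged into one kernel-verified Lean document; each statement's English description precedes it below -/
import Mathlib

section
/- Define q : ℕ → ℕ → ℤ by q(0,k) = k+1, q(k,k) = 2^k for k ≥ 1, and q(j,k) = 2·q(j-1,k-1) − q(j,k-1) for 0 < j < k. Then q(2,k) = (−1)^k · k + k for all k ≥ 2. -/
theorem stmt_1 (q : ℕ → ℕ → ℤ)
    (h0 : ∀ k : ℕ, q 0 k = (k : ℤ) + 1)
    (hd : ∀ k : ℕ, 1 ≤ k → q k k = 2 ^ k)
    (hr : ∀ j k : ℕ, 0 < j → j < k → q j k = 2 * q (j - 1) (k - 1) - q j (k - 1)) :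
    ∀ k : ℕ, 2 ≤ k → q 2 k = (-1) ^ k * (k : ℤ) + (k : ℤ) := by
  have h1 : ∀ k : ℕ, 1 ≤ k → 2 * q 1 k = 2 * (k : ℤ) + 1 - (-1) ^ k := by
    intro k hk
    induction k, hk using Nat.le_induction with
    | base => rw [hd 1 le_rfl]; norm_num
    | succ k hk ih =>
      have h := hr 1 (k + 1) one_pos (by omega)
      simp only [Nat.add_sub_cancel] at h
      rw [h, h0]
      push_cast
      ring_nf
      ring_nf at ih
      linarith [ih]
  intro k hk
  induction k, hk using Nat.le_induction with
  | base => rw [hd 2 (by norm_num)]; norm_num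
  | succ k hk ih =>
    have h := hr 2 (k + 1) two_pos (by omega)
    simp only [Nat.add_sub_cancel] at h
    have h1k := h1 k (by omega)
    rw [h]
    push_cast
    rw [pow_succ]
    linarith [ih, h1k]
end

section
/- Define q : ℕ → ℕ → ℤ by q(0,k) = k+1, q(k,k) = 2^k for k ≥ 1, and q(j,k) = 2·q(j-1,k-1) − q(j,k-1) for 0 < j < k. Then for all j, k with 2 ≤ j ≤ k, |q(j,k)| ≤ 2^(j−1) · C(k, j−1), where C denotes the binomial coefficient. -/
theorem stmt_2 (q : ℕ → ℕ → ℤ)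
    (h0 : ∀ k : ℕ, q 0 k = (k : ℤ) + 1)
    (hd : ∀ k : ℕ, 1 ≤ k → q k k = 2 ^ k)
    (hr : ∀ j k : ℕ, 0 < j → j < k → q j k = 2 * q (j - 1) (k - 1) - q j (k - 1)) :
    ∀ j k : ℕ, 2 ≤ j → j ≤ k → |q j k| ≤ 2 ^ (j - 1) * (Nat.choose k (j - 1) : ℤ) := by
  -- closed form for q 1
  have hq1 : ∀ m : ℕ, 1 ≤ m → q 1 m = if m % 2 = 1 then (m : ℤ) + 1 else (m : ℤ) := by
    intro m hm
    induction m with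
    | zero => omega
    | succ n ih =>
      rcases Nat.eq_or_lt_of_le hm with h1 | h1
      · have : n = 0 := by omega
        subst this
        simpa using hd 1 le_rfl
      · have hn : 1 ≤ n := by omega
        have := hr 1 (n + 1) (by omega) (by omega)
        simp only [Nat.add_sub_cancel] at this
        rw [this, h0, ih hn]
        have : n % 2 = 0 ∨ n % 2 = 1 := by omega
        rcases this with h | h
        · rw [if_neg (by omega : ¬ n % 2 = 1), if_pos (by omega : (n + 1) % 2 = 1)]
          push_cast
          ring
        · rw [if_pos h, if_neg (by omega : ¬ (n + 1) % 2 = 1)]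
          push_cast
          ring
  -- closed form for q 2
  have hq2 : ∀ k : ℕ, 2 ≤ k → q 2 k = if k % 2 = 0 then 2 * (k : ℤ) else 0 := by
    intro k hk
    induction k with
    | zero => omega
    | succ n ih =>
      rcases Nat.eq_or_lt_of_le hk with h1 | h1
      · have : n = 1 := by omega
        subst this
        have := hd 2 (by omega)
        rw [this]
        norm_num
      · have hn : 2 ≤ n := by omega
        have := hr 2 (n + 1) (by omega) (by omega)
        simp only [Nat.add_sub_cancel] at this
        rw [this, hq1 n (by omega), ih hn]
        have : n % 2 = 0 ∨ n % 2 = 1 := by omega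
        rcases this with h | h
        · rw [if_neg (by omega : ¬ n % 2 = 1), if_pos h, if_neg (by omega : ¬ (n + 1) % 2 = 0)]
          ring
        · rw [if_pos h, if_neg (by omega : ¬ n % 2 = 0),
            if_pos (by omega : (n + 1) % 2 = 0)]
          push_cast
          ring
  intro j k
  induction k using Nat.strong_induction_on generalizing j with
  | _ k IH =>
    intro hj hjk
    rcases Nat.eq_or_lt_of_le hjk with rfl | hlt
    · -- diagonal case j = k
      rw [hd j (by omega)]
      rw [abs_of_nonneg (by positivity)]
      have hc : Nat.choose j (j - 1) = j := by
        rw [Nat.choose_symm (show 1 ≤ j by omega), Nat.choose_one_right]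
      rw [hc]
      obtain ⟨a, rfl⟩ : ∃ a, j = a + 2 := ⟨j - 2, by omega⟩
      have : (2 : ℤ) ^ (a + 2) = 2 ^ (a + 1) * 2 := by ring
      rw [this]
      have h2 : (2 : ℤ) ≤ ((a : ℤ) + 2) := by omega
      have hp : (0 : ℤ) < 2 ^ (a + 1) := by positivity
      rw [show a + 2 - 1 = a + 1 from rfl]
      push_cast
      nlinarith
    · rcases Nat.eq_or_lt_of_le hj with rfl | hj3
      · -- j = 2
        rw [hq2 k (by omega)]
        rw [show (2:ℕ) - 1 = 1 from rfl, Nat.choose_one_right, pow_one]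
        split
        · rw [abs_of_nonneg (by positivity)]
        · rw [abs_zero]
          positivity
      · -- j ≥ 3
        obtain ⟨a, rfl⟩ : ∃ a, j = a + 3 := ⟨j - 3, by omega⟩
        obtain ⟨b, rfl⟩ : ∃ b, k = b + a + 4 := ⟨k - (a + 4), by omega⟩
        have hrec := hr (a + 3) (b + a + 4) (by omega) (by omega)
        have e1 : a + 3 - 1 = a + 2 := rfl
        have e2 : b + a + 4 - 1 = b + a + 3 := rfl
        rw [e1, e2] at hrec
        rw [hrec]
        have IH1 := IH (b + a + 3) (by omega) (a + 2) (by omega) (by omega)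
        have IH2 := IH (b + a + 3) (by omega) (a + 3) (by omega) (by omega)
        rw [show a + 2 - 1 = a + 1 from rfl] at IH1
        rw [show a + 3 - 1 = a + 2 from rfl] at IH2 ⊢
        have tri : |2 * q (a + 2) (b + a + 3) - q (a + 3) (b + a + 3)| ≤
            2 * |q (a + 2) (b + a + 3)| + |q (a + 3) (b + a + 3)| := by
          calc |2 * q (a + 2) (b + a + 3) - q (a + 3) (b + a + 3)|
              ≤ |2 * q (a + 2) (b + a + 3)| + |q (a + 3) (b + a + 3)| := abs_sub _ _
            _ = 2 * |q (a + 2) (b + a + 3)| + |q (a + 3) (b + a + 3)| := by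
                rw [abs_mul]; norm_num
        have pascal : Nat.choose (b + a + 4) (a + 2) =
            Nat.choose (b + a + 3) (a + 1) + Nat.choose (b + a + 3) (a + 2) := by
          exact Nat.choose_succ_succ (b + a + 3) (a + 1)
        rw [pascal]
        push_cast
        have hpow : (2 : ℤ) ^ (a + 2) = 2 * 2 ^ (a + 1) := by ring
        nlinarith [IH1, IH2, tri]
end

section
/- Define q : ℕ → ℕ → ℤ by q(0,k) = k+1, q(k,k) = 2^k for k ≥ 1, and q(j,k) = 2·q(j-1,k-1) − q(j,k-1) for 0 < j < k. Then for all j, k with 2 ≤ j ≤ k and k−j odd, 2(k−j+1) − q(j,k) ≤ 2^(j−1) · C(k, j−1). -/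
lemma q1_formula (q : ℕ → ℕ → ℤ)
    (h0 : ∀ k : ℕ, q 0 k = (k : ℤ) + 1)
    (hd : ∀ k : ℕ, 1 ≤ k → q k k = 2 ^ k)
    (hr : ∀ j k : ℕ, 0 < j → j < k → q j k = 2 * q (j - 1) (k - 1) - q j (k - 1)) :
    ∀ m : ℕ, 1 ≤ m → q 1 m = if Odd m then (m : ℤ) + 1 else (m : ℤ) := by
  intro m
  induction m with
  | zero => omega
  | succ n ih =>
    intro _
    rcases Nat.eq_or_lt_of_le (Nat.one_le_iff_ne_zero.mpr (Nat.succ_ne_zero n)) with h | h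
    · have : n = 0 := by omega
      subst this
      simp [hd 1 le_rfl]
    · have hn : 1 ≤ n := by omega
      have hrec := hr 1 (n+1) (by omega) (by omega)
      simp only [Nat.add_sub_cancel] at hrec
      rw [hrec, h0 n, ih hn]
      by_cases hodd : Odd n
      · have : ¬ Odd (n+1) := by simp [Nat.odd_add_one, Nat.not_even_iff_odd, hodd]
        simp only [hodd, this, if_true, if_false]
        push_cast; ring
      · have : Odd (n+1) := by simp [Nat.odd_add_one, Nat.not_odd_iff_even.mp hodd]
        simp only [hodd, this, if_true, if_false]
        push_cast; ring

lemma q2_formula (q : ℕ → ℕ → ℤ)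
    (h0 : ∀ k : ℕ, q 0 k = (k : ℤ) + 1)
    (hd : ∀ k : ℕ, 1 ≤ k → q k k = 2 ^ k)
    (hr : ∀ j k : ℕ, 0 < j → j < k → q j k = 2 * q (j - 1) (k - 1) - q j (k - 1)) :
    ∀ m : ℕ, 2 ≤ m → q 2 m = if Even m then 2 * (m : ℤ) else 0 := by
  intro m
  induction m with
  | zero => omega
  | succ n ih =>
    intro hm
    rcases Nat.eq_or_lt_of_le hm with h | h
    · have : n = 1 := by omega
      subst this
      norm_num [hd 2 (by omega)]
    · have hn : 2 ≤ n := by omega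
      have hrec := hr 2 (n+1) (by omega) (by omega)
      simp only [Nat.add_sub_cancel] at hrec
      rw [hrec, ih hn, q1_formula q h0 hd hr n (by omega)]
      by_cases hev : Even n
      · have h1 : ¬ Odd n := by simpa using hev
        have h2 : ¬ Even (n+1) := by simp [Nat.even_add_one, hev]
        simp [hev, h1, h2]
      · have h1 : Odd n := Nat.not_even_iff_odd.mp hev
        have h2 : Even (n+1) := by simp [Nat.even_add_one, hev]
        simp only [hev, h1, h2, Nat.not_even_iff_odd.mpr h1, if_true, if_false]
        push_cast; ring

lemma q_key (q : ℕ → ℕ → ℤ)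
    (h0 : ∀ k : ℕ, q 0 k = (k : ℤ) + 1)
    (hd : ∀ k : ℕ, 1 ≤ k → q k k = 2 ^ k)
    (hr : ∀ j k : ℕ, 0 < j → j < k → q j k = 2 * q (j - 1) (k - 1) - q j (k - 1)) :
    ∀ k j : ℕ, 2 ≤ j → j ≤ k →
      (Odd (k - j) → 2 * ((k : ℤ) - (j : ℤ) + 1) - 2 ^ (j - 1) * (Nat.choose k (j-1) : ℤ) ≤ q j k) ∧
      (Even (k - j) → q j k ≤ 2 ^ (j - 1) * (Nat.choose k (j-1) : ℤ)) := by
  intro k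
  induction k using Nat.strong_induction_on with
  | _ k IH =>
    intro j hj2 hjk
    rcases Nat.eq_or_lt_of_le hjk with heq | hlt
    · -- j = k
      subst heq
      constructor
      · intro hodd; simp at hodd
      · intro _
        rw [hd j (by omega)]
        have hc : Nat.choose j (j-1) = j := by
          rw [← Nat.choose_symm (by omega : j - 1 ≤ j)]
          have : j - (j-1) = 1 := by omega
          rw [this, Nat.choose_one_right]
        rw [hc]
        have e2 : j = (j-1) + 1 := by omega
        have : (2:ℤ)^j = 2 * 2^(j-1) := by
          conv_lhs => rw [e2]
          rw [pow_succ]; ring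
        rw [this]
        have hp : (0:ℤ) < 2^(j-1) := by positivity
        nlinarith [hp, (by exact_mod_cast hj2 : (2:ℤ) ≤ (j:ℤ))]
    · -- j < k
      rcases Nat.eq_or_lt_of_le hj2 with hj2' | hj3
    -- j = 2 case
      · subst hj2'
        rw [q2_formula q h0 hd hr k (by omega)]
        have hc : Nat.choose k 1 = k := Nat.choose_one_right k
        constructor
        · intro hodd
          have hko : Odd k := by
            obtain ⟨m, hm⟩ := hodd
            exact ⟨m+1, by omega⟩
          have : ¬ Even k := Nat.not_even_iff_odd.mpr hko
          simp [this, hc]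
        · intro hev
          have hke : Even k := by
            obtain ⟨m, hm⟩ := hev
            exact ⟨m+1, by omega⟩
          simp only [hke, hc, if_true]
          push_cast
          norm_num
      -- j ≥ 3
      · have hrec := hr j k (by omega) (by omega)
        have IH1 := IH (k-1) (by omega) (j-1) (by omega) (by omega)
        have IH2 := IH (k-1) (by omega) j (by omega) (by omega)
        -- Pascal cast
        have hpascal : (Nat.choose k (j-1) : ℤ) =
            (Nat.choose (k-1) (j-2) : ℤ) + (Nat.choose (k-1) (j-1) : ℤ) := by
          have e1 : k = (k-1) + 1 := by omega
          have e2 : j - 1 = (j-2) + 1 := by omega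
          have hn : Nat.choose k (j-1) = Nat.choose (k-1) (j-2) + Nat.choose (k-1) (j-1) := by
            conv_lhs => rw [e1, e2]
            rw [Nat.choose_succ_succ, Nat.succ_eq_add_one, ← e2]
          rw [hn]
          push_cast
          ring
        have hpow : (2 : ℤ) ^ (j-1) = 2 * 2 ^ (j-2) := by
          have e2 : j - 1 = (j-2) + 1 := by omega
          rw [e2, pow_succ]; ring
        have hcast1 : ((k-1 : ℕ) : ℤ) = (k : ℤ) - 1 := by push_cast [Nat.cast_sub (by omega : 1 ≤ k)]; ring
        have hcast2 : ((j-1 : ℕ) : ℤ) = (j : ℤ) - 1 := by push_cast [Nat.cast_sub (by omega : 1 ≤ j)]; ring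
        have e3 : (k-1) - (j-1) = k - j := by omega
        have e4 : (j-1) - 1 = j - 2 := by omega
        rw [e3, e4, hcast1, hcast2] at IH1
        constructor
        · intro hodd
          obtain ⟨m, hm⟩ := hodd
          have hodd1 : Odd (k - j) := ⟨m, hm⟩
          have hev2 : Even ((k-1) - j) := ⟨m, by omega⟩
          have A1 := IH1.1 hodd1
          have B2 := IH2.2 hev2
          rw [hrec, hpascal, hpow]
          push_cast [hcast1] at A1 B2 ⊢
          nlinarith [A1, B2, (by positivity : (0:ℤ) < 2 ^ (j-2)),
            (by omega : j ≤ k)]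
        · intro hev
          obtain ⟨m, hm⟩ := hev
          have hev1 : Even (k - j) := ⟨m, hm⟩
          have hodd2 : Odd ((k-1) - j) := ⟨m-1, by omega⟩
          have B1 := IH1.2 hev1
          have A2 := IH2.1 hodd2
          rw [hrec, hpascal, hpow]
          push_cast [hcast1] at B1 A2 ⊢
          nlinarith [B1, A2, (by positivity : (0:ℤ) < 2 ^ (j-2)),
            (by omega : j ≤ k)]

theorem stmt_3 (q : ℕ → ℕ → ℤ)
    (h0 : ∀ k : ℕ, q 0 k = (k : ℤ) + 1)
    (hd : ∀ k : ℕ, 1 ≤ k → q k k = 2 ^ k)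
    (hr : ∀ j k : ℕ, 0 < j → j < k → q j k = 2 * q (j - 1) (k - 1) - q j (k - 1)) :
    ∀ j k : ℕ, 2 ≤ j → j ≤ k → Odd (k - j) →
      2 * ((k : ℤ) - (j : ℤ) + 1) - q j k ≤ 2 ^ (j - 1) * (Nat.choose k (j - 1) : ℤ) := by
  intro j k hj hjk hodd
  have := (q_key q h0 hd hr k j hj hjk).1 hodd
  linarith
end

section
/- Define b(j,k) = q(j,k) if k−j is even, and b(j,k) = 2(k−j+1) − q(j,k) if k−j is odd (where q is the recursion q(0,k)=k+1, q(k,k)=2^k, q(j,k)=2q(j-1,k-1)−q(j,k-1) for 0<j<k). Then for all 2 ≤ j ≤ k, b(j,k) ≤ 2^(j−1)·C(k, j−1). -/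
theorem stmt_4 (q b : ℕ → ℕ → ℤ)
    (h0 : ∀ k : ℕ, q 0 k = (k : ℤ) + 1)
    (hd : ∀ k : ℕ, 1 ≤ k → q k k = 2 ^ k)
    (hr : ∀ j k : ℕ, 0 < j → j < k → q j k = 2 * q (j - 1) (k - 1) - q j (k - 1))
    (hbe : ∀ j k : ℕ, j ≤ k → Even (k - j) → b j k = q j k)
    (hbo : ∀ j k : ℕ, j ≤ k → Odd (k - j) → b j k = 2 * ((k : ℤ) - (j : ℤ) + 1) - q j k) :
    ∀ j k : ℕ, 2 ≤ j → j ≤ k → b j k ≤ 2 ^ (j - 1) * (Nat.choose k (j - 1) : ℤ) := by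
  -- closed form for q 1
  have q1 : ∀ k : ℕ, 1 ≤ k → q 1 k = if Even k then (k : ℤ) else (k : ℤ) + 1 := by
    intro k
    induction k with
    | zero => omega
    | succ n ih =>
      intro _
      rcases Nat.eq_zero_or_pos n with hn | hn
      · subst hn
        simp [hd 1 le_rfl, Nat.even_iff]
      · have hrec := hr 1 (n + 1) (by omega) (by omega)
        simp only [Nat.add_sub_cancel] at hrec
        rw [hrec, h0, ih hn]
        rcases Nat.even_or_odd n with h | h
        · have h1 : ¬ Even (n + 1) := by simp [Nat.even_add_one, h]
          simp [h, h1]; push_cast; ring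
        · have h2 : ¬ Even n := by simp [Nat.not_odd_iff_even, h]
          have h1 : Even (n + 1) := by simp [Nat.even_add_one, h2]
          simp [h1, h2]; push_cast; ring
  -- closed form for q 2
  have q2 : ∀ k : ℕ, 2 ≤ k → q 2 k = if Even k then 2 * (k : ℤ) else 0 := by
    intro k
    induction k with
    | zero => omega
    | succ n ih =>
      intro h
      rcases Nat.lt_or_ge n 2 with hn | hn
      · have : n = 1 := by omega
        subst this
        simpa [Nat.even_iff] using hd 2 (by omega)
      · have hrec := hr 2 (n + 1) (by omega) (by omega)
        simp only [Nat.add_sub_cancel] at hrec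
        rw [hrec, q1 n (by omega), ih hn]
        rcases Nat.even_or_odd n with h | h
        · have h1 : ¬ Even (n + 1) := by simp [Nat.even_add_one, h]
          simp [h, h1]
        · have h2 : ¬ Even n := by simp [Nat.not_odd_iff_even, h]
          have h1 : Even (n + 1) := by simp [Nat.even_add_one, h2]
          simp [h1, h2]
  -- bound for b 2
  have b2 : ∀ k : ℕ, 2 ≤ k → b 2 k ≤ 2 * (k : ℤ) := by
    intro k hk
    rcases Nat.even_or_odd (k - 2) with h | h
    · rw [hbe 2 k hk h, q2 k hk]
      have : Even k := by
        rw [Nat.even_iff] at h ⊢; omega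
      simp [this]
    · rw [hbo 2 k hk h, q2 k hk]
      have : ¬ Even k := by
        rw [Nat.odd_iff] at h; rw [Nat.even_iff]; omega
      simp [this]
  -- recursive inequality for b
  have ble : ∀ j k : ℕ, 2 ≤ j → j < k → b j k ≤ 2 * b (j - 1) (k - 1) + b j (k - 1) := by
    intro j k hj hjk
    have hq := hr j k (by omega) hjk
    have hk1 : ((k - 1 : ℕ) : ℤ) = (k : ℤ) - 1 := by
      have : 1 ≤ k := by omega
      push_cast [this]; ring
    have hkj : (j : ℤ) ≤ (k : ℤ) := by exact_mod_cast hjk.le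
    rcases Nat.even_or_odd (k - j) with h | h
    · -- k - j even, so (k-1)-(j-1) even, (k-1)-j odd
      have he : Even ((k - 1) - (j - 1)) := by
        rw [Nat.even_iff] at h ⊢; omega
      have ho : Odd ((k - 1) - j) := by
        rw [Nat.even_iff] at h; rw [Nat.odd_iff]; omega
      rw [hbe j k hjk.le h, hq, ← hbe (j - 1) (k - 1) (by omega) he,
        hbo j (k - 1) (by omega) ho, hk1]
      have hkj2 : (j : ℤ) + 2 ≤ (k : ℤ) := by
        have : j + 2 ≤ k := by
          rw [Nat.even_iff] at h; omega
        exact_mod_cast this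
      linarith
    · -- k - j odd
      have ho : Odd ((k - 1) - (j - 1)) := by
        rw [Nat.odd_iff] at h ⊢; omega
      have he : Even ((k - 1) - j) := by
        rw [Nat.odd_iff] at h; rw [Nat.even_iff]; omega
      have hj1 : ((j - 1 : ℕ) : ℤ) = (j : ℤ) - 1 := by
        have : 1 ≤ j := by omega
        push_cast [this]; ring
      have e1 := hbo (j - 1) (k - 1) (by omega) ho
      rw [hk1, hj1] at e1
      have e2 := hbe j (k - 1) (by omega) he
      rw [hbo j k hjk.le h, hq, e2]
      have : q (j - 1) (k - 1) = 2 * ((k : ℤ) - (j : ℤ) + 1) - b (j - 1) (k - 1) := by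
        rw [e1]; ring
      rw [this]
      linarith
  -- diagonal bound
  have diag : ∀ j : ℕ, 2 ≤ j → b j j ≤ 2 ^ (j - 1) * (Nat.choose j (j - 1) : ℤ) := by
    intro j hj
    have hb : b j j = 2 ^ j := by
      rw [hbe j j le_rfl (by simp), hd j (by omega)]
    rw [hb]
    have hc : j.choose (j - 1) = j := by
      rw [Nat.choose_symm (by omega)]
      first
        | rw [Nat.choose_one_right]
        | · have h1 : j - (j - 1) = 1 := by omega
            rw [h1, Nat.choose_one_right]
    rw [hc]
    obtain ⟨m, rfl⟩ : ∃ m, j = m + 2 := ⟨j - 2, by omega⟩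
    have e1 : (2 : ℤ) ^ (m + 2) = 2 * 2 ^ (m + 1) := by ring
    rw [e1, show m + 2 - 1 = m + 1 from by omega]
    have hp : (0 : ℤ) ≤ 2 ^ (m + 1) := by positivity
    have e2 : ((m + 2 : ℕ) : ℤ) = (m : ℤ) + 2 := by push_cast; ring
    rw [e2]
    nlinarith [Int.ofNat_nonneg m]
  -- main induction
  have main : ∀ k j : ℕ, 2 ≤ j → j ≤ k → b j k ≤ 2 ^ (j - 1) * (Nat.choose k (j - 1) : ℤ) := by
    intro k
    induction k with
    | zero => intro j h1 h2; omega
    | succ n ih =>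
      intro j h2 hjk
      rcases eq_or_lt_of_le hjk with heq | hlt
      · -- j = n + 1 : diagonal
        rw [heq]
        rw [heq] at h2
        exact diag (n + 1) h2
      · -- j ≤ n
        have hjn : j ≤ n := by omega
        rcases eq_or_lt_of_le h2 with h2eq | h3
        · -- j = 2
          subst h2eq
          calc b 2 (n + 1) ≤ 2 * ((n + 1 : ℕ) : ℤ) := b2 (n + 1) (by omega)
            _ ≤ 2 ^ (2 - 1) * (Nat.choose (n + 1) (2 - 1) : ℤ) := by
                simp [Nat.choose_one_right]
        · -- j ≥ 3
          obtain ⟨m, rfl⟩ : ∃ m, j = m + 3 := ⟨j - 3, by omega⟩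
          have key := ble (m + 3) (n + 1) (by omega) hlt
          have ih1 := ih (m + 2) (by omega) (by omega)
          have ih2 := ih (m + 3) (by omega) hjn
          have e1 : m + 3 - 1 = m + 2 := by omega
          have e2 : m + 2 - 1 = m + 1 := by omega
          have e0 : n + 1 - 1 = n := by omega
          rw [e1, e0] at key
          rw [e1] at ih2
          rw [e2] at ih1
          have pascal : Nat.choose (n + 1) (m + 2) = Nat.choose n (m + 1) + Nat.choose n (m + 2) :=
            Nat.choose_succ_succ n (m + 1)
          rw [show m + 3 - 1 = m + 2 from by omega, pascal]
          push_cast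
          calc b (m + 3) (n + 1) ≤ 2 * b (m + 2) n + b (m + 3) n := key
            _ ≤ 2 * (2 ^ (m + 1) * (n.choose (m + 1) : ℤ)) + 2 ^ (m + 2) * (n.choose (m + 2) : ℤ) := by
                linarith
            _ = 2 ^ (m + 2) * ((n.choose (m + 1) : ℤ) + (n.choose (m + 2) : ℤ)) := by ring
  intro j k hj hjk
  exact main k j hj hjk
end

section
/- For natural numbers m < k, the quantity 1/2 + (k−m) + (1/2)·Σ_{j=0}^{min(m+1, k)} 2^j · C(m+1, j) · C(k, j−1) is at most (3/2)·(6ek/m)^m + k, where e is Euler's number and C(k, −1) is interpreted as 0. -/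
open Finset in
lemma aux_fact_le (i : ℕ) : ∀ d : ℕ, (i + d).factorial ≤ (i + d) ^ d * i.factorial := by
  intro d
  induction d with
  | zero => simp
  | succ d ih =>
    have h1 : (i + (d + 1)).factorial = (i + d + 1) * (i + d).factorial := by
      rw [← Nat.add_assoc]; exact Nat.factorial_succ _
    rw [h1]
    calc (i + d + 1) * (i + d).factorial ≤ (i + d + 1) * ((i + d) ^ d * i.factorial) :=
          Nat.mul_le_mul_left _ ih
      _ ≤ (i + d + 1) * ((i + d + 1) ^ d * i.factorial) := by
          exact Nat.mul_le_mul_left _ (Nat.mul_le_mul_right _ (Nat.pow_le_pow_left (Nat.le_succ _) d))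
      _ = (i + (d + 1)) ^ (d + 1) * i.factorial := by ring_nf
  
lemma aux_choose_nat (i m k : ℕ) (him : i ≤ m) (hmk : m ≤ k) :
    m.factorial * k.choose i ≤ k ^ m := by
  have h0 : m = i + (m - i) := by omega
  have h1 : m.factorial ≤ m ^ (m - i) * i.factorial := by
    calc m.factorial = (i + (m - i)).factorial := by rw [← h0]
      _ ≤ (i + (m - i)) ^ (m - i) * i.factorial := aux_fact_le i (m - i)
      _ = m ^ (m - i) * i.factorial := by rw [← h0]
  calc m.factorial * k.choose i ≤ (m ^ (m - i) * i.factorial) * k.choose i :=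
        Nat.mul_le_mul_right _ h1
    _ = m ^ (m - i) * (i.factorial * k.choose i) := by ring
    _ = m ^ (m - i) * k.descFactorial i := by rw [Nat.descFactorial_eq_factorial_mul_choose]
    _ ≤ k ^ (m - i) * k ^ i :=
        Nat.mul_le_mul (Nat.pow_le_pow_left hmk _) (Nat.descFactorial_le_pow k i)
    _ = k ^ m := by rw [← pow_add]; congr 1; omega

lemma aux_pow_le_exp_fact (m : ℕ) : (m : ℝ) ^ m ≤ Real.exp 1 ^ m * m.factorial := by
  have hfac : (0 : ℝ) < m.factorial := by exact_mod_cast m.factorial_pos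
  have h1 : ((m : ℝ)) ^ m / m.factorial ≤ Real.exp m := by
    have := Real.sum_le_exp_of_nonneg (x := (m : ℝ)) (by positivity) (m + 1)
    refine le_trans ?_ this
    exact Finset.single_le_sum (f := fun i => (m : ℝ) ^ i / i.factorial)
      (fun i _ => by positivity) (Finset.self_mem_range_succ m)
  have h2 : Real.exp (m : ℝ) = Real.exp 1 ^ m := by
    rw [← Real.exp_nat_mul]; norm_num
  rw [div_le_iff₀ hfac] at h1
  rw [h2] at h1
  exact h1

lemma aux_choose_real (i m k : ℕ) (him : i ≤ m) (hmk : m ≤ k) (hm : 0 < m) :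
    (k.choose i : ℝ) ≤ (Real.exp 1 * k / m) ^ m := by
  have hfac : (0 : ℝ) < m.factorial := by exact_mod_cast m.factorial_pos
  have hmpos : (0 : ℝ) < (m : ℝ) ^ m := by positivity
  have h1 : (k.choose i : ℝ) ≤ (k : ℝ) ^ m / m.factorial := by
    rw [le_div_iff₀ hfac]
    exact_mod_cast (mul_comm (m.factorial) (k.choose i)) ▸ aux_choose_nat i m k him hmk
  have h2 : (Real.exp 1 * k / m) ^ m = Real.exp 1 ^ m * (k : ℝ) ^ m / (m : ℝ) ^ m := by
    rw [div_pow, mul_pow]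
  rw [h2]
  refine h1.trans ?_
  rw [div_le_div_iff₀ hfac hmpos]
  calc (k : ℝ) ^ m * (m : ℝ) ^ m ≤ (k : ℝ) ^ m * (Real.exp 1 ^ m * m.factorial) := by
        apply mul_le_mul_of_nonneg_left (aux_pow_le_exp_fact m) (by positivity)
    _ = Real.exp 1 ^ m * (k : ℝ) ^ m * m.factorial := by ring

open Finset in
theorem stmt_5 (m k : ℕ) (hm : 0 < m) (hmk : m < k) :
    (1 / 2 : ℝ) + ((k : ℝ) - (m : ℝ)) +
      (1 / 2) * ∑ j ∈ Finset.Icc 1 (min (m + 1) k),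
        (2 : ℝ) ^ j * (Nat.choose (m + 1) j : ℝ) * (Nat.choose k (j - 1) : ℝ)
      ≤ (3 / 2) * (6 * Real.exp 1 * (k : ℝ) / (m : ℝ)) ^ m + (k : ℝ) := by
  set E : ℝ := (Real.exp 1 * k / m) ^ m with hE
  have hEnn : 0 ≤ E := by positivity
  -- termwise bound
  have hterm : ∀ j ∈ Finset.Icc 1 (min (m + 1) k),
      (2 : ℝ) ^ j * (Nat.choose (m + 1) j : ℝ) * (Nat.choose k (j - 1) : ℝ)
        ≤ (2 : ℝ) ^ j * (Nat.choose (m + 1) j : ℝ) * E := by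
    intro j hj
    simp only [Finset.mem_Icc, le_min_iff] at hj
    apply mul_le_mul_of_nonneg_left _ (by positivity)
    exact aux_choose_real (j - 1) m k (by omega) (by omega) hm
  have hsum1 : ∑ j ∈ Finset.Icc 1 (min (m + 1) k),
      (2 : ℝ) ^ j * (Nat.choose (m + 1) j : ℝ) * (Nat.choose k (j - 1) : ℝ)
      ≤ (∑ j ∈ Finset.Icc 1 (min (m + 1) k),
        (2 : ℝ) ^ j * (Nat.choose (m + 1) j : ℝ)) * E := by
    rw [Finset.sum_mul]
    exact Finset.sum_le_sum hterm
  have hsum2 : ∑ j ∈ Finset.Icc 1 (min (m + 1) k),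
      (2 : ℝ) ^ j * (Nat.choose (m + 1) j : ℝ) ≤ (3 : ℝ) ^ (m + 1) := by
    have hsub : Finset.Icc 1 (min (m + 1) k) ⊆ Finset.range (m + 2) := by
      intro j hj; simp only [Finset.mem_Icc, le_min_iff] at hj
      simp only [Finset.mem_range]; omega
    have h1 : ∑ j ∈ Finset.Icc 1 (min (m + 1) k),
        (2 : ℝ) ^ j * (Nat.choose (m + 1) j : ℝ)
        ≤ ∑ j ∈ Finset.range (m + 2), (2 : ℝ) ^ j * (Nat.choose (m + 1) j : ℝ) :=
      Finset.sum_le_sum_of_subset_of_nonneg hsub (fun i _ _ => by positivity)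
    refine h1.trans_eq ?_
    have := add_pow (2 : ℝ) 1 (m + 1)
    simp only [one_pow, mul_one] at this
    norm_num at this ⊢
    rw [← this]
  have hS : ∑ j ∈ Finset.Icc 1 (min (m + 1) k),
      (2 : ℝ) ^ j * (Nat.choose (m + 1) j : ℝ) * (Nat.choose k (j - 1) : ℝ)
      ≤ (3 : ℝ) ^ (m + 1) * E :=
    hsum1.trans (mul_le_mul_of_nonneg_right hsum2 hEnn)
  have hfin : (6 * Real.exp 1 * (k : ℝ) / (m : ℝ)) ^ m = 6 ^ m * E := by
    rw [hE, ← mul_pow]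
    congr 1
    field_simp
  rw [hfin]
  have hm1 : (1 : ℝ) ≤ (m : ℝ) := by exact_mod_cast hm
  have h36 : (3 : ℝ) ^ m ≤ 6 ^ m := pow_le_pow_left₀ (by norm_num) (by norm_num) m
  rw [pow_succ] at hS
  linarith [hS, mul_le_mul_of_nonneg_right h36 hEnn]
end

section
/- Let K be a field, and let P, Q ∈ K[X] be polynomials of degrees p and q respectively with p > q > 0. Then P and Q have a greatest common divisor of degree j if and only if the signed subresultant coefficients satisfy sRes₀(P,Q) = ⋯ = sRes_{j−1}(P,Q) = 0 and sRes_j(P,Q) ≠ 0; and in that case the j-th signed subresultant polynomial sResP_j(P,Q) is a greatest common divisor of P and Q. -/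
/-- Entry `(i, c)` of the `j`-th Sylvester–Habicht matrix of `P` and `Q` with respect to the
formal degrees `p > q`: the rows are `X^(q-j-1)P, …, P, Q, …, X^(p-j-1)Q`, written in the
monomial basis `X^(p+q-j-1), …, X, 1`. -/
noncomputable def syhaEntry {K : Type*} [Field K] (p q j : ℕ) (P Q : Polynomial K)
    (i c : ℕ) : K :=
  if i < q - j then (Polynomial.X ^ (q - j - 1 - i) * P).coeff (p + q - j - 1 - c)
  else (Polynomial.X ^ (i - (q - j)) * Q).coeff (p + q - j - 1 - c)

/-- The `j`-th signed subresultant polynomial `sResP_j(P,Q)`: its coefficient of `X^l` is the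
determinant of the square submatrix of `SyHa_j(P,Q)` made of the first `p+q-2j-1` columns
together with the column of index `p+q-j-1-l` (the column of the monomial `X^l`). -/
noncomputable def sResP {K : Type*} [Field K] (p q j : ℕ) (P Q : Polynomial K) :
    Polynomial K :=
  ∑ l ∈ Finset.range (j + 1),
    Polynomial.C (Matrix.det (Matrix.of fun r s : Fin (p + q - 2 * j) =>
      syhaEntry p q j P Q (r : ℕ)
        (if (s : ℕ) < p + q - 2 * j - 1 then (s : ℕ) else p + q - j - 1 - l))) *
      Polynomial.X ^ l

/-- The `j`-th signed subresultant coefficient `sRes_j(P,Q)`. -/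
noncomputable def sRes {K : Type*} [Field K] (p q j : ℕ) (P Q : Polynomial K) : K :=
  (sResP p q j P Q).coeff j

namespace SubresAux

open Polynomial Finset Matrix

variable {K : Type*} [Field K]

/-- The rows of the Sylvester–Habicht matrix, as polynomials. -/
noncomputable def rowPoly (p q j : ℕ) (P Q : Polynomial K) (i : ℕ) : Polynomial K :=
  if i < q - j then Polynomial.X ^ (q - j - 1 - i) * P else Polynomial.X ^ (i - (q - j)) * Q

lemma syhaEntry_eq (p q j : ℕ) (P Q : Polynomial K) (i c : ℕ) :
    syhaEntry p q j P Q i c = (rowPoly p q j P Q i).coeff (p + q - j - 1 - c) := by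
  unfold syhaEntry rowPoly
  split <;> rfl

lemma rowPoly_dvd {p q j : ℕ} {P Q D : Polynomial K} (hp : D ∣ P) (hq : D ∣ Q) (i : ℕ) :
    D ∣ rowPoly p q j P Q i := by
  unfold rowPoly
  split
  · exact hp.mul_left _
  · exact hq.mul_left _

lemma rowPoly_natDegree_le {p q j : ℕ} {P Q : Polynomial K} (hP : P.natDegree = p)
    (hQ : Q.natDegree = q) (hj : j ≤ q) {i : ℕ} (hi : i < p + q - 2 * j) :
    (rowPoly p q j P Q i).natDegree ≤ p + q - j - 1 := by
  unfold rowPoly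
  split
  · refine (natDegree_mul_le).trans ?_
    simp only [natDegree_X_pow, hP]
    omega
  · refine (natDegree_mul_le).trans ?_
    simp only [natDegree_X_pow, hQ]
    omega

lemma coeff_sum_C_mul_X_pow (f : ℕ → K) (N m : ℕ) :
    (∑ l ∈ Finset.range N, Polynomial.C (f l) * Polynomial.X ^ l).coeff m =
      if m < N then f m else 0 := by
  rw [finset_sum_coeff]
  simp only [coeff_C_mul, coeff_X_pow]
  rw [Finset.sum_congr rfl (fun l _ => by rw [mul_ite, mul_one, mul_zero])]
  rw [Finset.sum_ite_eq (Finset.range N) m f]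
  simp [Finset.mem_range]

lemma natDegree_sResP_le (p q j : ℕ) (P Q : Polynomial K) :
    (sResP p q j P Q).natDegree ≤ j := by
  unfold sResP
  refine natDegree_sum_le_of_forall_le _ _ (fun l hl => ?_)
  refine (natDegree_mul_le).trans ?_
  simp only [natDegree_C, natDegree_X_pow, zero_add]
  exact Nat.lt_succ_iff.mp (Finset.mem_range.mp hl)

/-- `sResP` equals the determinant of the matrix over `K[X]` whose last column consists of
the row polynomials. -/
lemma sResP_eq_det {p q j : ℕ} (P Q : Polynomial K) (hP : P.natDegree = p)
    (hQ : Q.natDegree = q) (hq : q < p) (hj : j ≤ q) :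
    sResP p q j P Q =
      Matrix.det (Matrix.of fun r s : Fin (p + q - 2 * j) =>
        if (s : ℕ) < p + q - 2 * j - 1 then Polynomial.C (syhaEntry p q j P Q r s)
        else rowPoly p q j P Q (r : ℕ)) := by
  have hn1 : 1 ≤ p + q - 2 * j := by omega
  set n := p + q - 2 * j with hn
  clear_value n
  -- transpose
  set B : Matrix (Fin n) (Fin n) (Polynomial K) := Matrix.of fun s r : Fin n =>
    if (s : ℕ) < n - 1 then Polynomial.C (syhaEntry p q j P Q r s)
    else rowPoly p q j P Q (r : ℕ) with hB
  have htr : Matrix.det (Matrix.of fun r s : Fin n =>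
      if (s : ℕ) < n - 1 then Polynomial.C (syhaEntry p q j P Q r s)
      else rowPoly p q j P Q (r : ℕ)) = B.det := by
    rw [← Matrix.det_transpose B]
    rfl
  rw [htr]
  set last : Fin n := ⟨n - 1, by omega⟩ with hlast
  set u : ℕ → Fin n → Polynomial K := fun m r => Polynomial.C ((rowPoly p q j P Q r).coeff m)
    with hu
  have hBlast : B last = ∑ m ∈ Finset.range (p + q - j), (Polynomial.X ^ m : Polynomial K) • u m := by
    funext r
    have h1 : B last r = rowPoly p q j P Q (r : ℕ) := by
      simp only [hB, Matrix.of_apply, hlast]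
      rw [if_neg (by omega)]
    rw [h1]
    rw [Finset.sum_apply]
    simp only [Pi.smul_apply, hu, smul_eq_mul]
    have hdeg : (rowPoly p q j P Q (r : ℕ)).natDegree < p + q - j := by
      have := rowPoly_natDegree_le (P := P) (Q := Q) hP hQ hj (i := (r : ℕ)) (by omega)
      omega
    conv_lhs => rw [Polynomial.as_sum_range' _ _ hdeg]
    refine Finset.sum_congr rfl (fun m _ => ?_)
    rw [← Polynomial.C_mul_X_pow_eq_monomial, mul_comm]
  have hstep : B.det = ∑ m ∈ Finset.range (p + q - j),
      (Polynomial.X ^ m : Polynomial K) * (B.updateRow last (u m)).det := by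
    have h0 : B = B.updateRow last (∑ m ∈ Finset.range (p + q - j),
        (Polynomial.X ^ m : Polynomial K) • u m) := by
      rw [← hBlast, Matrix.updateRow_eq_self]
    conv_lhs => rw [h0]
    have : (B.updateRow last (∑ m ∈ Finset.range (p + q - j),
        (Polynomial.X ^ m : Polynomial K) • u m)).det
        = ∑ m ∈ Finset.range (p + q - j),
          (B.updateRow last ((Polynomial.X ^ m : Polynomial K) • u m)).det :=
      (Matrix.detRowAlternating).map_update_sum (Finset.range (p + q - j)) last _ B
    rw [this]
    refine Finset.sum_congr rfl (fun m _ => ?_)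
    rw [Matrix.det_updateRow_smul]
  rw [hstep]
  -- now evaluate each term
  have hterm : ∀ m ∈ Finset.range (p + q - j), (Polynomial.X ^ m : Polynomial K) *
      (B.updateRow last (u m)).det =
      if m < j + 1 then
        Polynomial.C (Matrix.det (Matrix.of fun r s : Fin n =>
          syhaEntry p q j P Q (r : ℕ)
            (if (s : ℕ) < n - 1 then (s : ℕ) else p + q - j - 1 - m))) * Polynomial.X ^ m
      else 0 := by
    intro m hm
    rw [Finset.mem_range] at hm
    by_cases hmj : m < j + 1
    · rw [if_pos hmj]
      rw [mul_comm]
      congr 1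
      -- the matrix is the C-image of the transposed subresultant matrix
      have : B.updateRow last (u m) =
          ((Matrix.of fun r s : Fin n =>
            syhaEntry p q j P Q (r : ℕ)
              (if (s : ℕ) < n - 1 then (s : ℕ) else p + q - j - 1 - m)).map
            (Polynomial.C : K → Polynomial K))ᵀ := by
        have hlastval : ((last : Fin n) : ℕ) = n - 1 := rfl
        ext s r
        by_cases hs : (s : ℕ) < n - 1
        · have hsne : s ≠ last := by
            intro h
            rw [h, hlastval] at hs
            omega
          rw [Matrix.updateRow_ne hsne]
          simp only [hB, Matrix.of_apply, Matrix.transpose_apply, Matrix.map_apply]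
          rw [if_pos hs, if_pos hs]
        · have hs' : s = last := by
            apply Fin.ext
            rw [hlastval]
            have := s.isLt
            omega
          subst hs'
          rw [Matrix.updateRow_self]
          simp only [hu, Matrix.transpose_apply, Matrix.map_apply, Matrix.of_apply]
          rw [if_neg hs, syhaEntry_eq]
          have harg : p + q - j - 1 - (p + q - j - 1 - m) = m := by omega
          rw [harg]
      rw [this, Matrix.det_transpose, ← RingHom.mapMatrix_apply, ← RingHom.map_det]
    · rw [if_neg hmj]
      -- two equal rows
      have hcvlt : p + q - j - 1 - m < n := by omega
      set c : Fin n := ⟨p + q - j - 1 - m, hcvlt⟩ with hc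
      have hcval : (c : ℕ) = p + q - j - 1 - m := rfl
      have hlastval : ((last : Fin n) : ℕ) = n - 1 := rfl
      have hcne : c ≠ last := by
        rw [hc, hlast]
        simp only [ne_eq, Fin.mk.injEq]
        omega
      have hrowc : (B.updateRow last (u m)) c = u m := by
        rw [Matrix.updateRow_ne hcne]
        funext r
        simp only [hB, Matrix.of_apply, hu]
        rw [if_pos (by omega : p + q - j - 1 - m < n - 1)]
        rw [syhaEntry_eq]
        have harg : p + q - j - 1 - (p + q - j - 1 - m) = m := by omega
        rw [harg]
      have : (B.updateRow last (u m)).det = 0 := by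
        apply Matrix.det_zero_of_row_eq hcne
        rw [hrowc, Matrix.updateRow_self]
      rw [this, mul_zero]
  rw [Finset.sum_congr rfl hterm]
  rw [Finset.sum_ite, Finset.sum_const_zero, add_zero]
  have hfil : Finset.filter (fun m => m < j + 1) (Finset.range (p + q - j))
      = Finset.range (j + 1) := by
    ext a
    simp only [Finset.mem_filter, Finset.mem_range]
    omega
  rw [hfil]
  unfold sResP
  rw [← hn]

lemma dvd_sResP {p q j : ℕ} {P Q D : Polynomial K} (hP : P.natDegree = p)
    (hQ : Q.natDegree = q) (hq : q < p) (hj : j ≤ q) (hDP : D ∣ P) (hDQ : D ∣ Q) :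
    D ∣ sResP p q j P Q := by
  rw [sResP_eq_det P Q hP hQ hq hj]
  set n := p + q - 2 * j with hn
  have hn1 : 1 ≤ n := by omega
  set N : Matrix (Fin n) (Fin n) (Polynomial K) := Matrix.of fun r s : Fin n =>
    if (s : ℕ) < n - 1 then Polynomial.C (syhaEntry p q j P Q r s)
    else rowPoly p q j P Q (r : ℕ) with hN
  set I : Ideal (Polynomial K) := Ideal.span {D} with hI
  have h0 : Ideal.Quotient.mk I N.det = 0 := by
    rw [RingHom.map_det]
    apply Matrix.det_eq_zero_of_column_eq_zero (⟨n - 1, by omega⟩ : Fin n)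
    intro r
    simp only [RingHom.mapMatrix_apply, Matrix.map_apply, hN, Matrix.of_apply]
    rw [if_neg (show ¬ ((⟨n - 1, by omega⟩ : Fin n) : ℕ) < n - 1 by simp)]
    rw [Ideal.Quotient.eq_zero_iff_mem, hI, Ideal.mem_span_singleton]
    exact rowPoly_dvd hDP hDQ _
  rw [Ideal.Quotient.eq_zero_iff_mem, hI, Ideal.mem_span_singleton] at h0
  exact h0

lemma sRes_eq_det {p q : ℕ} (j : ℕ) (P Q : Polynomial K) (hq : q < p) (hj : j ≤ q) :
    sRes p q j P Q = Matrix.det (Matrix.of fun r s : Fin (p + q - 2 * j) =>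
      syhaEntry p q j P Q (r : ℕ) (s : ℕ)) := by
  unfold sRes sResP
  rw [coeff_sum_C_mul_X_pow]
  rw [if_pos (Nat.lt_succ_self j)]
  congr 1
  ext r s
  simp only [Matrix.of_apply]
  congr 1
  have := s.isLt
  split
  · rfl
  · congr 1
    omega

end SubresAux

open SubresAux Polynomial Finset Matrix in
theorem stmt_7 {K : Type*} [Field K] [DecidableEq (Polynomial K)] (P Q : Polynomial K) (p q : ℕ)
    (hP : P.natDegree = p) (hQ : Q.natDegree = q) (hq0 : 0 < q) (hqp : q < p)
    (j : ℕ) (hj : j ≤ q) :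
    ((EuclideanDomain.gcd P Q).natDegree = j ↔
      (∀ i < j, sRes p q i P Q = 0) ∧ sRes p q j P Q ≠ 0) ∧
    ((EuclideanDomain.gcd P Q).natDegree = j →
      Associated (sResP p q j P Q) (EuclideanDomain.gcd P Q)) := by
  have hP0 : P ≠ 0 := fun h => by rw [h, natDegree_zero] at hP; omega
  have hQ0 : Q ≠ 0 := fun h => by rw [h, natDegree_zero] at hQ; omega
  set D : Polynomial K := EuclideanDomain.gcd P Q with hD
  have hD0 : D ≠ 0 := fun h => hP0 (EuclideanDomain.gcd_eq_zero_iff.mp h).1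
  have hDP : D ∣ P := EuclideanDomain.gcd_dvd_left P Q
  have hDQ : D ∣ Q := EuclideanDomain.gcd_dvd_right P Q
  set d : ℕ := D.natDegree with hd
  have hdq : d ≤ q := hQ ▸ Polynomial.natDegree_le_of_dvd hDQ hQ0
  -- F1 : the small subresultants vanish
  have F1 : ∀ i < d, sRes p q i P Q = 0 := by
    intro i hi
    have hiq : i ≤ q := by omega
    have hdvd : D ∣ sResP p q i P Q := dvd_sResP hP hQ hqp hiq hDP hDQ
    have hzero : sResP p q i P Q = 0 := by
      by_contra hne
      have := Polynomial.natDegree_le_of_dvd hdvd hne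
      have := natDegree_sResP_le p q i P Q
      omega
    unfold sRes
    rw [hzero, Polynomial.coeff_zero]
  -- F2 : sRes_d ≠ 0
  have F2 : sRes p q d P Q ≠ 0 := by
    rw [sRes_eq_det d P Q hqp hdq]
    intro h0
    set n := p + q - 2 * d with hn
    clear_value n
    obtain ⟨v, hv0, hvM⟩ := Matrix.exists_vecMul_eq_zero_iff.mpr h0
    set v' : ℕ → K := fun t => if h : t < n then v ⟨t, h⟩ else 0 with hv'
    set W : Polynomial K := ∑ t ∈ Finset.range n, Polynomial.C (v' t) * rowPoly p q d P Q t
      with hW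
    -- W has all coefficients ≥ d equal to zero
    have hWcoeff : ∀ e, d ≤ e → W.coeff e = 0 := by
      intro e he
      rw [hW, finset_sum_coeff]
      simp only [Polynomial.coeff_C_mul]
      by_cases hle : e ≤ p + q - d - 1
      · have hcvlt : p + q - d - 1 - e < n := by omega
        set c : Fin n := ⟨p + q - d - 1 - e, hcvlt⟩ with hc
        have hcval : (c : ℕ) = p + q - d - 1 - e := rfl
        have := congrFun hvM c
        simp only [Matrix.vecMul, dotProduct, Pi.zero_apply] at this
        rw [← this]
        rw [← Fin.sum_univ_eq_sum_range (fun t => v' t * (rowPoly p q d P Q t).coeff e)]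
        refine Finset.sum_congr rfl (fun r _ => ?_)
        simp only [hv', dif_pos r.isLt, Fin.eta, Matrix.of_apply]
        congr 1
        rw [syhaEntry_eq]
        congr 1
        omega
      · refine Finset.sum_eq_zero (fun t ht => ?_)
        rw [Finset.mem_range] at ht
        rw [Polynomial.coeff_eq_zero_of_natDegree_lt, mul_zero]
        have := rowPoly_natDegree_le (P := P) (Q := Q) hP hQ hdq (i := t) (by omega)
        omega
    have hDW : D ∣ W := by
      refine Finset.dvd_sum (fun t _ => ?_)
      exact (rowPoly_dvd hDP hDQ t).mul_left _
    have hW0 : W = 0 := by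
      by_contra hne
      have h1 := Polynomial.natDegree_le_of_dvd hDW hne
      have h2 := hWcoeff W.natDegree (by omega)
      exact hne (Polynomial.leadingCoeff_eq_zero.mp h2)
    -- split W into U * P + V * Q
    set U : Polynomial K := ∑ t ∈ Finset.range (q - d),
      Polynomial.C (v' t) * Polynomial.X ^ (q - d - 1 - t) with hU
    set V : Polynomial K := ∑ k ∈ Finset.range (p - d),
      Polynomial.C (v' (q - d + k)) * Polynomial.X ^ k with hV
    have hsplit : W = U * P + V * Q := by
      rw [hW]
      have hnsum : n = (q - d) + (p - d) := by omega
      rw [hnsum, Finset.sum_range_add]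
      congr 1
      · rw [hU, Finset.sum_mul]
        refine Finset.sum_congr rfl (fun t ht => ?_)
        rw [Finset.mem_range] at ht
        unfold rowPoly
        rw [if_pos ht, mul_assoc]
      · rw [hV, Finset.sum_mul]
        refine Finset.sum_congr rfl (fun k _ => ?_)
        unfold rowPoly
        rw [if_neg (by omega), Nat.add_sub_cancel_left, mul_assoc]
    -- coprimality of P/D and Q/D
    set P₁ : Polynomial K := P / D with hP₁
    set Q₁ : Polynomial K := Q / D with hQ₁
    have hPD : D * P₁ = P := EuclideanDomain.mul_div_cancel' hD0 hDP
    have hQD : D * Q₁ = Q := EuclideanDomain.mul_div_cancel' hD0 hDQ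
    have hQ₁0 : Q₁ ≠ 0 := fun h => hQ0 (by rw [← hQD, h, mul_zero])
    have hcop : IsCoprime P₁ Q₁ := by
      have hbz := EuclideanDomain.gcd_eq_gcd_ab P Q
      refine ⟨EuclideanDomain.gcdA P Q, EuclideanDomain.gcdB P Q, ?_⟩
      have key : D * (EuclideanDomain.gcdA P Q * P₁ + EuclideanDomain.gcdB P Q * Q₁)
          = D * 1 := by
        calc D * (EuclideanDomain.gcdA P Q * P₁ + EuclideanDomain.gcdB P Q * Q₁)
            = EuclideanDomain.gcdA P Q * (D * P₁) + EuclideanDomain.gcdB P Q * (D * Q₁) := by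
              ring
          _ = EuclideanDomain.gcdA P Q * P + EuclideanDomain.gcdB P Q * Q := by rw [hPD, hQD]
          _ = D * 1 := by rw [mul_one, hD, hbz]; ring
      exact mul_left_cancel₀ hD0 key
    have hU0 : U = 0 := by
      by_cases hqd : q - d = 0
      · rw [hU, hqd, Finset.range_zero, Finset.sum_empty]
      · by_contra hUne
        have hUP : U * P = -(V * Q) := by
          have := hW0
          rw [hsplit] at this
          linear_combination this
        have hUP₁ : U * P₁ = -(V * Q₁) := by
          apply mul_left_cancel₀ hD0
          have h1 : D * (U * P₁) = U * P := by rw [← hPD]; ring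
          have h2 : D * -(V * Q₁) = -(V * Q) := by rw [← hQD]; ring
          rw [h1, h2, hUP]
        have hdvd : Q₁ ∣ U * P₁ := ⟨-V, by rw [hUP₁]; ring⟩
        have hQU : Q₁ ∣ U := (hcop.symm).dvd_of_dvd_mul_right hdvd
        have hdegQ₁ : Q₁.natDegree = q - d := by
          have : Q.natDegree = D.natDegree + Q₁.natDegree := by
            rw [← hQD] at hQ ⊢
            exact Polynomial.natDegree_mul hD0 hQ₁0
          omega
        have h1 : Q₁.natDegree ≤ U.natDegree := Polynomial.natDegree_le_of_dvd hQU hUne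
        have h2 : U.natDegree ≤ q - d - 1 := by
          rw [hU]
          refine natDegree_sum_le_of_forall_le _ _ (fun t ht => ?_)
          refine (natDegree_mul_le).trans ?_
          simp only [natDegree_C, natDegree_X_pow, zero_add]
          rw [Finset.mem_range] at ht
          omega
        omega
    have hV0 : V = 0 := by
      have hVQ : V * Q = 0 := by
        have := hW0
        rw [hsplit, hU0, zero_mul, zero_add] at this
        exact this
      rcases mul_eq_zero.mp hVQ with h | h
      · exact h
      · exact absurd h hQ0
    -- derive v = 0
    apply hv0
    funext r
    by_cases hr : (r : ℕ) < q - d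
    · have : U.coeff (q - d - 1 - (r : ℕ)) = v r := by
        rw [hU, finset_sum_coeff]
        simp only [Polynomial.coeff_C_mul, Polynomial.coeff_X_pow]
        rw [Finset.sum_eq_single (r : ℕ)]
        · rw [if_pos rfl, mul_one]
          simp only [hv', dif_pos r.isLt, Fin.eta]
        · intro t ht hne
          rw [Finset.mem_range] at ht
          rw [if_neg (by omega), mul_zero]
        · intro h
          exact absurd (Finset.mem_range.mpr hr) h
      rw [hU0, Polynomial.coeff_zero] at this
      rw [← this]
      rfl
    · have hrlt : (r : ℕ) - (q - d) < p - d := by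
        have := r.isLt
        omega
      have : V.coeff ((r : ℕ) - (q - d)) = v r := by
        rw [hV, finset_sum_coeff]
        simp only [Polynomial.coeff_C_mul, Polynomial.coeff_X_pow]
        rw [Finset.sum_eq_single ((r : ℕ) - (q - d))]
        · rw [if_pos rfl, mul_one]
          have harg : q - d + ((r : ℕ) - (q - d)) = (r : ℕ) := by omega
          rw [harg]
          simp only [hv', dif_pos r.isLt, Fin.eta]
        · intro t ht hne
          rw [if_neg (by omega), mul_zero]
        · intro h
          exact absurd (Finset.mem_range.mpr hrlt) h
      rw [hV0, Polynomial.coeff_zero] at this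
      rw [← this]
      rfl
  -- association when degrees match
  have Fassoc : d = j → Associated (sResP p q j P Q) D := by
    intro hdj
    subst hdj
    have hne : sResP p q d P Q ≠ 0 := by
      intro h
      apply F2
      unfold sRes
      rw [h, Polynomial.coeff_zero]
    have hdvd : D ∣ sResP p q d P Q := dvd_sResP hP hQ hqp hdq hDP hDQ
    obtain ⟨u, hu⟩ := hdvd
    have hu0 : u ≠ 0 := fun h => hne (by rw [hu, h, mul_zero])
    have hdeg : u.natDegree = 0 := by
      have h1 : (sResP p q d P Q).natDegree = D.natDegree + u.natDegree := by
        rw [hu]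
        exact Polynomial.natDegree_mul hD0 hu0
      have h2 := natDegree_sResP_le p q d P Q
      omega
    have hC : u = Polynomial.C (u.coeff 0) := Polynomial.eq_C_of_natDegree_eq_zero hdeg
    have hc0 : u.coeff 0 ≠ 0 := fun h => hu0 (by rw [hC, h, map_zero])
    have huu : IsUnit u := by
      rw [Polynomial.isUnit_iff]
      exact ⟨u.coeff 0, isUnit_iff_ne_zero.mpr hc0, hC.symm⟩
    exact (Associated.symm ⟨huu.unit, by rw [IsUnit.unit_spec, ← hu]⟩)
  constructor
  · constructor
    · intro hdj
      exact ⟨fun i hi => F1 i (by omega), by rw [← hdj]; exact F2⟩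
    · rintro ⟨h1, h2⟩
      by_contra hne
      rcases Nat.lt_or_ge d j with h | h
      · exact F2 (h1 d h)
      · have : j < d := by omega
        exact h2 (F1 j this)
  · intro hdj
    exact Fassoc hdj
end

section
/- Let d ≥ 2, ℓ ≥ 1, and let P(Y₁,…,Y_ℓ) = Σ_{i=1}^ℓ Π_{j=0}^{d−1} (Y_i − j)². Let S ⊆ ℝ^{ℓ+1} be defined by P(Y) = 0 and 0 ≤ X ≤ Y₁ + d·Y₂ + d²·Y₃ + ⋯ + d^{ℓ−1}·Y_ℓ. For each integer x with 0 ≤ x ≤ d^ℓ − 1, the fiber S_x = {y ∈ ℝ^ℓ : (y, x) ∈ S} is finite and has cardinality exactly d^ℓ − x. -/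
theorem stmt_13 (d ℓ : ℕ) (hd : 2 ≤ d) (hl : 1 ≤ ℓ) (x : ℕ) (hx : x ≤ d ^ ℓ - 1) :
    let S : Set (Fin ℓ → ℝ) :=
      {y | (∑ i : Fin ℓ, ∏ j ∈ Finset.range d, (y i - (j : ℝ)) ^ 2) = 0 ∧
        0 ≤ (x : ℝ) ∧ (x : ℝ) ≤ ∑ i : Fin ℓ, (d : ℝ) ^ (i : ℕ) * y i}
    S.Finite ∧ Nat.card S = d ^ ℓ - x := by
  intro S
  have hd0 : 0 < d := by omega
  have hN : 0 < d ^ ℓ := Nat.pow_pos hd0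
  have hxN : x < d ^ ℓ := by omega
  -- membership characterization
  have hmem : ∀ y : Fin ℓ → ℝ, y ∈ S ↔
      ((∀ i, ∃ j : Fin d, y i = (j : ℕ)) ∧
        (x : ℝ) ≤ ∑ i : Fin ℓ, (d : ℝ) ^ (i : ℕ) * y i) := by
    intro y
    constructor
    · rintro ⟨h0, -, hle⟩
      refine ⟨?_, hle⟩
      intro i
      have hterm : ∀ k : Fin ℓ, 0 ≤ ∏ j ∈ Finset.range d, (y k - (j : ℝ)) ^ 2 :=
        fun k => Finset.prod_nonneg fun j _ => sq_nonneg _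
      have hz := (Finset.sum_eq_zero_iff_of_nonneg (fun k _ => hterm k)).1 h0 i
        (Finset.mem_univ i)
      obtain ⟨j, hj, hjz⟩ := Finset.prod_eq_zero_iff.1 hz
      have := sq_eq_zero_iff.1 hjz
      exact ⟨⟨j, Finset.mem_range.1 hj⟩, by simpa using by linarith⟩
    · rintro ⟨h1, hle⟩
      refine ⟨?_, by positivity, hle⟩
      apply Finset.sum_eq_zero
      intro i _
      obtain ⟨j, hj⟩ := h1 i
      apply Finset.prod_eq_zero (Finset.mem_range.2 j.2)
      rw [hj, sub_self]
      simp
  -- cast lemma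
  have hcast : ∀ f : Fin ℓ → Fin d,
      ((x : ℝ) ≤ ∑ i : Fin ℓ, (d : ℝ) ^ (i : ℕ) * ((f i : ℕ) : ℝ)) ↔
        x ≤ ∑ i : Fin ℓ, (f i : ℕ) * d ^ (i : ℕ) := by
    intro f
    have : (∑ i : Fin ℓ, (d : ℝ) ^ (i : ℕ) * ((f i : ℕ) : ℝ)) =
        ((∑ i : Fin ℓ, (f i : ℕ) * d ^ (i : ℕ) : ℕ) : ℝ) := by
      push_cast; exact Finset.sum_congr rfl fun i _ => by ring
    rw [this]
    exact_mod_cast Iff.rfl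
  -- equiv between subtype of functions and S
  let T := {f : Fin ℓ → Fin d // x ≤ ∑ i : Fin ℓ, (f i : ℕ) * d ^ (i : ℕ)}
  let Φ : T → S := fun f =>
    ⟨fun i => ((f.1 i : ℕ) : ℝ), (hmem _).2 ⟨fun i => ⟨f.1 i, rfl⟩, (hcast f.1).2 f.2⟩⟩
  have hΦbij : Function.Bijective Φ := by
    constructor
    · rintro ⟨f, hf⟩ ⟨g, hg⟩ h
      simp only [Φ, Subtype.mk.injEq] at h
      ext i
      exact_mod_cast congrFun h i
    · rintro ⟨y, hy⟩
      obtain ⟨h1, h2⟩ := (hmem y).1 hy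
      choose f hf using h1
      have hyf : y = fun i => ((f i : ℕ) : ℝ) := funext fun i => hf i
      refine ⟨⟨f, (hcast f).1 ?_⟩, ?_⟩
      · rw [hyf] at h2; simpa using h2
      · exact Subtype.ext hyf.symm
  have hequiv : T ≃ S := Equiv.ofBijective Φ hΦbij
  have hfin : S.Finite := by
    rw [← Set.finite_coe_iff]
    exact Finite.of_equiv T hequiv
  refine ⟨hfin, ?_⟩
  rw [← Nat.card_congr hequiv]
  -- T ≃ Set.Ici of Fin (d^ℓ)
  let x' : Fin (d ^ ℓ) := ⟨x, hxN⟩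
  have hequiv2 : T ≃ Set.Ici x' := by
    refine (finFunctionFinEquiv.subtypeEquiv fun f => ?_)
    rw [Set.mem_Ici, Fin.le_def, finFunctionFinEquiv_apply]
  rw [Nat.card_congr hequiv2, Nat.card_eq_fintype_card, Fintype.card_Ici, Fin.card_Ici]
end

section
/- Consider the semi-algebraic set S ⊆ ℝ^{ℓ+1} (coordinates Y₁,…,Y_ℓ,X, with m ≤ ℓ) defined by Y_i(Y_i − 1) = 0 for 1 ≤ i ≤ m, and 0 ≤ X ≤ Y₁ + 2Y₂ + ⋯ + 2^{m−1}Y_m. For each integer x ∈ {0, 1, …, 2^{m−1}}, the fiber S_x = {y ∈ ℝ^ℓ : (y,x) ∈ S} has a number of connected components that strictly decreases in x on integer points; in particular, fibers over distinct integer points x ∈ {0,…,2^{m−1}} have pairwise distinct numbers of connected components. -/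
/-- The fiber `S_x` of the semi-algebraic set `S ⊆ ℝ^{ℓ+1}` defined by
`Y_i(Y_i − 1) = 0` for `1 ≤ i ≤ m` and `0 ≤ X ≤ Y₁ + 2Y₂ + ⋯ + 2^{m−1}Y_m`,
over the point `X = x`. -/
def stmt14Fiber (ℓ m : ℕ) (x : ℝ) : Set (Fin ℓ → ℝ) :=
  {y | (∀ i : Fin ℓ, (i : ℕ) < m → y i * (y i - 1) = 0) ∧
    0 ≤ x ∧ x ≤ ∑ i : Fin ℓ, (if (i : ℕ) < m then (2 : ℝ) ^ (i : ℕ) else 0) * y i}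

open Finset

namespace Stmt14

variable {ℓ m : ℕ}

lemma sum_trunc {M : Type*} [AddCommMonoid M] (hml : m ≤ ℓ) (f : Fin ℓ → M)
    (hf : ∀ i : Fin ℓ, ¬ (i : ℕ) < m → f i = 0) :
    ∑ i : Fin ℓ, f i = ∑ i : Fin m, f (Fin.castLE hml i) := by
  have : ∑ i : Fin m, f (Fin.castLE hml i) = ∑ i ∈ univ.map (Fin.castLEEmb hml), f i := (Finset.sum_map univ (Fin.castLEEmb hml) f).symm
  rw [this]
  apply (Finset.sum_subset (Finset.subset_univ _) _).symm
  intro i _ hi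
  apply hf
  intro h
  exact hi (Finset.mem_map.2 ⟨⟨(i : ℕ), h⟩, Finset.mem_univ _, Fin.ext rfl⟩)

def ptOf (hml : m ≤ ℓ) (b : Fin m → Fin 2) : Fin ℓ → ℝ :=
  fun j => if h : (j : ℕ) < m then ((b ⟨j, h⟩ : ℕ) : ℝ) else 0

def natSum (b : Fin m → Fin 2) : ℕ := ∑ i : Fin m, (b i : ℕ) * 2 ^ (i : ℕ)

lemma sum_ptOf (hml : m ≤ ℓ) (b : Fin m → Fin 2) :
    ∑ i : Fin ℓ, (if (i : ℕ) < m then (2 : ℝ) ^ (i : ℕ) else 0) * ptOf hml b i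
      = (natSum b : ℝ) := by
  rw [sum_trunc hml _ (fun i hi => by simp [hi])]
  rw [natSum, Nat.cast_sum]
  apply Finset.sum_congr rfl
  intro i _
  have hi : ((Fin.castLE hml i : Fin ℓ) : ℕ) < m := i.isLt
  simp only [ptOf, hi, dif_pos, if_pos]
  push_cast
  rw [mul_comm]
  congr 1

lemma ptOf_mem (hml : m ≤ ℓ) (b : Fin m → Fin 2) {x : ℕ} (hx : x ≤ natSum b) :
    ptOf hml b ∈ stmt14Fiber ℓ m (x : ℝ) := by
  refine ⟨?_, by positivity, ?_⟩
  · intro i hi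
    simp only [ptOf, hi, dif_pos]
    have : b ⟨i, hi⟩ = 0 ∨ b ⟨i, hi⟩ = 1 := by omega
    rcases this with h | h <;> rw [h] <;> norm_num
  · rw [sum_ptOf hml b]
    exact_mod_cast hx

noncomputable def strOf (hml : m ≤ ℓ) (y : Fin ℓ → ℝ) : Fin m → Fin 2 :=
  fun i => if y (Fin.castLE hml i) = 1 then 1 else 0

lemma coord_eq (hml : m ≤ ℓ) {x : ℝ} {y : Fin ℓ → ℝ} (hy : y ∈ stmt14Fiber ℓ m x)
    (i : Fin m) : y (Fin.castLE hml i) = ((strOf hml y i : ℕ) : ℝ) := by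
  have h := hy.1 (Fin.castLE hml i) i.isLt
  rcases mul_eq_zero.mp h with h0 | h1
  · rw [strOf, if_neg (by rw [h0]; norm_num), h0]; norm_num
  · have h1 : y (Fin.castLE hml i) = 1 := by linarith [sub_eq_zero.mp h1]
    rw [strOf, if_pos h1, h1]; norm_num

lemma sum_eq (hml : m ≤ ℓ) {x : ℝ} {y : Fin ℓ → ℝ} (hy : y ∈ stmt14Fiber ℓ m x) :
    ∑ i : Fin ℓ, (if (i : ℕ) < m then (2 : ℝ) ^ (i : ℕ) else 0) * y i
      = (natSum (strOf hml y) : ℝ) := by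
  rw [← sum_ptOf hml (strOf hml y)]
  rw [sum_trunc hml _ (fun i hi => by simp [hi]), sum_trunc hml _ (fun i hi => by simp [hi])]
  apply Finset.sum_congr rfl
  intro i _
  congr 1
  rw [coord_eq hml hy i]
  simp only [ptOf, Fin.coe_castLE, i.isLt, dif_pos]

lemma strOf_valid (hml : m ≤ ℓ) {x : ℕ} {y : Fin ℓ → ℝ} (hy : y ∈ stmt14Fiber ℓ m (x : ℝ)) :
    x ≤ natSum (strOf hml y) := by
  have := hy.2.2
  rw [sum_eq hml hy] at this
  exact_mod_cast this

lemma joined_ptOf (hml : m ≤ ℓ) {x : ℕ} {y : Fin ℓ → ℝ} (hy : y ∈ stmt14Fiber ℓ m (x : ℝ)) :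
    Joined (⟨y, hy⟩ : stmt14Fiber ℓ m (x : ℝ))
      ⟨ptOf hml (strOf hml y), ptOf_mem hml _ (strOf_valid hml hy)⟩ := by
  have key : ∀ t : ℝ, (fun j : Fin ℓ => if (j : ℕ) < m then y j else (1 - t) * y j)
      ∈ stmt14Fiber ℓ m (x : ℝ) := by
    intro t
    refine ⟨?_, hy.2.1, ?_⟩
    · intro i hi
      simp only [hi, if_pos]
      exact hy.1 i hi
    · have : ∑ i : Fin ℓ, (if (i : ℕ) < m then (2 : ℝ) ^ (i : ℕ) else 0) *
          (if (i : ℕ) < m then y i else (1 - t) * y i)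
          = ∑ i : Fin ℓ, (if (i : ℕ) < m then (2 : ℝ) ^ (i : ℕ) else 0) * y i := by
        apply Finset.sum_congr rfl
        intro i _
        by_cases h : (i : ℕ) < m <;> simp [h]
      rw [this]
      exact hy.2.2
  refine ⟨⟨⟨fun t => ⟨fun j => if (j : ℕ) < m then y j else (1 - (t : ℝ)) * y j, key t⟩, ?_⟩, ?_, ?_⟩⟩
  · apply Continuous.subtype_mk
    apply continuous_pi
    intro j
    by_cases h : (j : ℕ) < m <;> simp only [h, if_pos, if_neg, if_true, if_false]
    · exact continuous_const
    · fun_prop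
  · ext j
    by_cases h : (j : ℕ) < m <;> simp [h]
  · ext j
    by_cases h : (j : ℕ) < m <;> simp only [h, if_pos, if_neg]
    · have := coord_eq hml hy ⟨j, h⟩
      simp only [ptOf, h, dif_pos]
      convert this using 2
      exact Fin.ext rfl
    · simp [ptOf, h]

lemma component_str_eq (hml : m ≤ ℓ) {x : ℝ} {p q : stmt14Fiber ℓ m x}
    (h : p ∈ connectedComponent q) (i : Fin m) : strOf hml p.1 i = strOf hml q.1 i := by
  by_contra hne
  set f : (stmt14Fiber ℓ m x) → ℝ := fun z => z.1 (Fin.castLE hml i) with hf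
  have hfc : Continuous f := (continuous_apply _).comp continuous_subtype_val
  have hC : IsPreconnected (connectedComponent q) := isPreconnected_connectedComponent
  have hq : q ∈ connectedComponent q := mem_connectedComponent
  have hhalf : (1 / 2 : ℝ) ∈ f '' connectedComponent q := by
    have hp1 := coord_eq hml p.2 i
    have hq1 := coord_eq hml q.2 i
    have h01 : (strOf hml p.1 i = 0 ∧ strOf hml q.1 i = 1) ∨
        (strOf hml p.1 i = 1 ∧ strOf hml q.1 i = 0) := by omega
    rcases h01 with ⟨h1, h2⟩ | ⟨h1, h2⟩
    · apply hC.intermediate_value h hq hfc.continuousOn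
      rw [hf]; simp only; rw [hp1, hq1, h1, h2]; norm_num
    · apply hC.intermediate_value hq h hfc.continuousOn
      rw [hf]; simp only; rw [hp1, hq1, h1, h2]; norm_num
  obtain ⟨z, _, hz⟩ := hhalf
  have := z.2.1 (Fin.castLE hml i) i.isLt
  rw [hf] at hz
  simp only at hz
  rw [hz] at this
  norm_num at this

lemma strOf_ptOf (hml : m ≤ ℓ) (b : Fin m → Fin 2) : strOf hml (ptOf hml b) = b := by
  funext i
  have : ptOf hml b (Fin.castLE hml i) = ((b i : ℕ) : ℝ) := by
    simp only [ptOf, Fin.coe_castLE, i.isLt, dif_pos]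
  rw [strOf, this]
  have hb : b i = 0 ∨ b i = 1 := by omega
  rcases hb with h | h <;> rw [h] <;> norm_num

lemma card_components (hml : m ≤ ℓ) (x : ℕ) :
    Nat.card (ConnectedComponents (stmt14Fiber ℓ m (x : ℝ))) = 2 ^ m - x := by
  have hbij : Function.Bijective
      (fun b : {b : Fin m → Fin 2 // x ≤ natSum b} =>
        (ConnectedComponents.mk ⟨ptOf hml b.1, ptOf_mem hml b.1 b.2⟩ :
          ConnectedComponents (stmt14Fiber ℓ m (x : ℝ)))) := by
    constructor
    · rintro ⟨b1, h1⟩ ⟨b2, h2⟩ h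
      have h' := ConnectedComponents.coe_eq_coe'.mp h
      have := fun i => component_str_eq hml h' i
      rw [strOf_ptOf, strOf_ptOf] at this
      exact Subtype.ext (funext this)
    · intro c
      obtain ⟨p, rfl⟩ := ConnectedComponents.surjective_coe c
      refine ⟨⟨strOf hml p.1, strOf_valid hml p.2⟩, ?_⟩
      apply ConnectedComponents.coe_eq_coe'.mpr
      have hj : Joined (⟨p.1, p.2⟩ : stmt14Fiber ℓ m (x : ℝ))
          ⟨ptOf hml (strOf hml p.1), ptOf_mem hml _ (strOf_valid hml p.2)⟩ :=
        joined_ptOf hml p.2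
      have : (⟨ptOf hml (strOf hml p.1), ptOf_mem hml _ (strOf_valid hml p.2)⟩ :
          stmt14Fiber ℓ m (x : ℝ)) ∈ pathComponent p := hj.mem_pathComponent (mem_pathComponent_self p)
      exact pathComponent_subset_component _ this
  rw [← Nat.card_congr (Equiv.ofBijective _ hbij)]
  have e1 : {b : Fin m → Fin 2 // x ≤ natSum b} ≃ {k : Fin (2 ^ m) // x ≤ (k : ℕ)} :=
    (finFunctionFinEquiv.subtypeEquiv fun b => by
      rw [finFunctionFinEquiv_apply]; rfl)
  have e2 : {k : Fin (2 ^ m) // x ≤ (k : ℕ)} ≃ Fin (2 ^ m - x) :=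
    { toFun := fun k => ⟨(k : ℕ) - x, by omega⟩
      invFun := fun j => ⟨⟨(j : ℕ) + x, by omega⟩, by simp⟩
      left_inv := fun k => by
        rcases k with ⟨⟨k, hk⟩, hxk⟩
        change x ≤ k at hxk
        apply Subtype.ext
        apply Fin.ext
        simp only [Fin.val_mk]
        omega
      right_inv := fun j => by
        apply Fin.ext
        simp only [Fin.val_mk]
        omega }
  rw [Nat.card_congr (e1.trans e2), Nat.card_eq_fintype_card, Fintype.card_fin]

end Stmt14

theorem stmt_14 (ℓ m : ℕ) (hm : 1 ≤ m) (hml : m ≤ ℓ) :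
    ∀ x y : ℕ, x < y → y ≤ 2 ^ (m - 1) →
      Nat.card (ConnectedComponents (stmt14Fiber ℓ m (y : ℝ))) <
        Nat.card (ConnectedComponents (stmt14Fiber ℓ m (x : ℝ))) := by
  intro x y hxy hy2
  rw [Stmt14.card_components hml x, Stmt14.card_components hml y]
  have h1 : (2 : ℕ) ^ (m - 1) < 2 ^ m := Nat.pow_lt_pow_right one_lt_two (by omega)
  omega
end

section
/- Let Q be a real quadratic form on ℝ^{ℓ+1} with eigenvalues λ₀ ≤ λ₁ ≤ ⋯ ≤ λ_ℓ (of its symmetric matrix), and suppose exactly j of them are negative (index(Q) = j). Then the set {y ∈ S^ℓ : Q(y) ≥ 0} deformation retracts onto (hence is homotopy equivalent to) a sphere of dimension ℓ − j, namely the unit sphere of the sum of the nonnegative eigenspaces of Q. -/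
open scoped unitInterval

open Matrix in
lemma quad_formula {n : ℕ} (M : Matrix (Fin n) (Fin n) ℝ) (hM : M.IsHermitian)
    (y : EuclideanSpace ℝ (Fin n)) :
    dotProduct (y : Fin n → ℝ) (M.mulVec (y : Fin n → ℝ)) =
      ∑ i, hM.eigenvalues i * (hM.eigenvectorBasis.repr y i)^2 := by
  set b := hM.eigenvectorBasis with hb
  set c : Fin n → ℝ := fun i => b.repr y i with hc
  have hy : y = ∑ i, c i • (b i : EuclideanSpace ℝ (Fin n)) := (b.sum_repr y).symm
  have hmv : M.mulVec (y : Fin n → ℝ) = ∑ i, (c i * hM.eigenvalues i) • (b i : Fin n → ℝ) := by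
    conv_lhs => rw [hy]
    have : (∑ i, c i • (b i : EuclideanSpace ℝ (Fin n))).ofLp
        = ∑ i, c i • ((b i : EuclideanSpace ℝ (Fin n)) : Fin n → ℝ) := by rw [WithLp.ofLp_sum]; rfl
    rw [this]
    simp only [← Matrix.mulVecLin_apply, map_sum, _root_.map_smul]
    refine Finset.sum_congr rfl fun i _ => ?_
    have h2 : M.mulVec ((b i : EuclideanSpace ℝ (Fin n)) : Fin n → ℝ)
        = hM.eigenvalues i • ((b i : EuclideanSpace ℝ (Fin n)) : Fin n → ℝ) :=
      hM.mulVec_eigenvectorBasis i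
    rw [Matrix.mulVecLin_apply, h2, smul_smul, mul_comm]
  have hdot : ∀ v : EuclideanSpace ℝ (Fin n),
      dotProduct (y : Fin n → ℝ) (v : Fin n → ℝ) = inner ℝ y v := by
    intro v
    rw [EuclideanSpace.inner_eq_star_dotProduct, star_trivial, dotProduct_comm]
  have hsum : WithLp.toLp 2 (M.mulVec (y : Fin n → ℝ))
      = ∑ i, (c i * hM.eigenvalues i) • (b i : EuclideanSpace ℝ (Fin n)) := by
    rw [hmv, WithLp.toLp_sum]; rfl
  rw [show M *ᵥ y.ofLp = (WithLp.toLp 2 (M *ᵥ y.ofLp)).ofLp from rfl, hdot, hsum, inner_sum]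
  refine Finset.sum_congr rfl fun i _ => ?_
  rw [real_inner_smul_right]
  have : inner ℝ y (b i) = c i := by
    rw [real_inner_comm, hc]
    simp [OrthonormalBasis.repr_apply_apply]
  rw [this]; ring

lemma aux_span_mem {n : ℕ} (b : OrthonormalBasis (Fin n) ℝ (EuclideanSpace ℝ (Fin n)))
    (S : Set (Fin n)) (y : EuclideanSpace ℝ (Fin n)) :
    y ∈ Submodule.span ℝ (b '' S) ↔ ∀ i ∉ S, b.repr y i = 0 := by
  rw [← b.coe_toBasis, Module.Basis.mem_span_image, Finsupp.support_subset_iff]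
  simp [OrthonormalBasis.coe_toBasis_repr_apply]

lemma aux_finrank {ι E : Type*} [Fintype ι] [NormedAddCommGroup E] [InnerProductSpace ℝ E]
    (b : OrthonormalBasis ι ℝ E) (s : Finset ι) :
    Module.finrank ℝ (Submodule.span ℝ (b '' ↑s)) = s.card := by
  have h1 : LinearIndependent ℝ (fun i : ↥(↑s : Set ι) => b i) :=
    ((b.orthonormal.comp _ Subtype.val_injective)).linearIndependent
  have h2 : Set.range (fun i : ↥(↑s : Set ι) => b i) = b '' ↑s := by
    rw [show (fun i : ↥(↑s : Set ι) => b i) = b ∘ Subtype.val from rfl, Set.range_comp,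
      Subtype.range_coe]
  rw [← h2, finrank_span_eq_card h1]
  simp

theorem stmt_16 (ℓ j : ℕ) (hjl : j ≤ ℓ)
    (M : Matrix (Fin (ℓ + 1)) (Fin (ℓ + 1)) ℝ) (hM : M.IsHermitian)
    (hj : (Finset.univ.filter fun i => hM.eigenvalues i < 0).card = j) :
    let Q : EuclideanSpace ℝ (Fin (ℓ + 1)) → ℝ :=
      fun y => dotProduct (y : Fin (ℓ + 1) → ℝ) (M.mulVec (y : Fin (ℓ + 1) → ℝ))
    let A : Set (EuclideanSpace ℝ (Fin (ℓ + 1))) := {y | ‖y‖ = 1 ∧ 0 ≤ Q y}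
    let L : Submodule ℝ (EuclideanSpace ℝ (Fin (ℓ + 1))) :=
      Submodule.span ℝ {v | ∃ i : Fin (ℓ + 1), 0 ≤ hM.eigenvalues i ∧ v = hM.eigenvectorBasis i}
    let LS : Set (EuclideanSpace ℝ (Fin (ℓ + 1))) := {y | ‖y‖ = 1 ∧ y ∈ L}
    (∃ H : C(↥A × I, ↥A),
      (∀ p : ↥A, H (p, 0) = p) ∧
      (∀ p : ↥A, ((H (p, 1) : EuclideanSpace ℝ (Fin (ℓ + 1)))) ∈ LS) ∧
      (∀ (p : ↥A) (t : I), (p : EuclideanSpace ℝ (Fin (ℓ + 1))) ∈ LS → H (p, t) = p)) ∧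
    Nonempty (ContinuousMap.HomotopyEquiv ↥A
      ↥(Metric.sphere (0 : EuclideanSpace ℝ (Fin (ℓ - j + 1))) 1)) := by
  intro Q A L LS
  set b := hM.eigenvectorBasis with hb
  set lam := hM.eigenvalues with hlam
  -- quadratic form formula
  have hQ : ∀ y : EuclideanSpace ℝ (Fin (ℓ + 1)), Q y = ∑ i, lam i * (b.repr y i)^2 := fun y => quad_formula M hM y
  -- characterization of L
  have hLset : {v | ∃ i : Fin (ℓ + 1), 0 ≤ lam i ∧ v = b i} = b '' {i | 0 ≤ lam i} := by
    ext v; simp [Set.mem_image, eq_comm]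
  have hLmem : ∀ y : EuclideanSpace ℝ (Fin (ℓ + 1)), y ∈ L ↔ ∀ i, lam i < 0 → b.repr y i = 0 := by
    intro y
    have : L = Submodule.span ℝ (b '' {i | 0 ≤ lam i}) := by rw [← hLset]
    rw [this, aux_span_mem]
    constructor
    · intro h i hi; exact h i (by simpa using not_le.mpr hi)
    · intro h i hi; exact h i (by simpa using not_le.mp (by simpa using hi))
  -- the deformation map
  set m : EuclideanSpace ℝ (Fin (ℓ + 1)) → ℝ → EuclideanSpace ℝ (Fin (ℓ + 1)) := fun y t => b.repr.symm ((WithLp.equiv 2 _).symm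
      (fun i => if lam i < 0 then (1 - t) * b.repr y i else b.repr y i)) with hm
  have hm_repr : ∀ (y : EuclideanSpace ℝ (Fin (ℓ + 1))) (t : ℝ) (i),
      b.repr (m y t) i = if lam i < 0 then (1 - t) * b.repr y i else b.repr y i := by
    intro y t i
    rw [hm]
    simp only [LinearIsometryEquiv.apply_symm_apply]
    rfl
  have hQsmul : ∀ (a : ℝ) (v : EuclideanSpace ℝ (Fin (ℓ + 1))), Q (a • v) = a^2 * Q v := by
    intro a v
    rw [hQ, hQ, Finset.mul_sum]
    refine Finset.sum_congr rfl fun i _ => ?_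
    have : b.repr (a • v) i = a * b.repr v i := by
      rw [map_smul]; rfl
    rw [this]; ring
  have hQm : ∀ (y : EuclideanSpace ℝ (Fin (ℓ + 1))) (t : ℝ), 0 ≤ t → t ≤ 1 → Q y ≤ Q (m y t) := by
    intro y t ht0 ht1
    rw [hQ, hQ]
    refine Finset.sum_le_sum fun i _ => ?_
    rw [hm_repr]
    split_ifs with h
    · have h1 : 0 ≤ t * (2 - t) := mul_nonneg ht0 (by linarith)
      nlinarith [mul_nonneg (mul_nonneg (neg_nonneg.mpr h.le) (sq_nonneg (b.repr y i))) h1]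
    · exact le_rfl
  -- nonvanishing of m on A
  have hmzero : ∀ (y : EuclideanSpace ℝ (Fin (ℓ + 1))) (t : ℝ), ‖y‖ = 1 → 0 ≤ Q y →
      m y t ≠ 0 := by
    intro y t hy1 hQy hmz
    have hcz : ∀ i, (if lam i < 0 then (1 - t) * b.repr y i else b.repr y i) = 0 := by
      intro i
      rw [← hm_repr y t i, hmz]
      simp
    have hpos_zero : ∀ i, ¬ lam i < 0 → b.repr y i = 0 := by
      intro i h
      have := hcz i
      rwa [if_neg h] at this
    have hterm : ∀ i ∈ Finset.univ, lam i * (b.repr y i)^2 ≤ 0 := by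
      intro i _
      by_cases h : lam i < 0
      · exact mul_nonpos_of_nonpos_of_nonneg h.le (sq_nonneg _)
      · rw [hpos_zero i h]; simp
    have hQ0 : ∑ i, lam i * (b.repr y i)^2 = 0 := by
      have h1 : Q y ≤ 0 := by rw [hQ]; exact Finset.sum_nonpos hterm
      have := le_antisymm h1 hQy
      rw [hQ] at this; exact this
    have hall := (Finset.sum_eq_zero_iff_of_nonpos hterm).1 hQ0
    have hzero : ∀ i, b.repr y i = 0 := by
      intro i
      by_cases h : lam i < 0
      · have := hall i (Finset.mem_univ i)
        have h2 : (b.repr y i)^2 = 0 := by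
          rcases mul_eq_zero.1 this with h3 | h3
          · exact absurd h3 (ne_of_lt h)
          · exact h3
        exact pow_eq_zero_iff two_ne_zero |>.1 h2
      · exact hpos_zero i h
    have hy0 : y = 0 := by
      have := b.sum_repr y
      rw [← this]
      refine Finset.sum_eq_zero fun i _ => ?_
      rw [hzero i, zero_smul]
    rw [hy0] at hy1
    simp at hy1
  -- m y t = y when the mask is trivial
  have hm_id : ∀ (y : EuclideanSpace ℝ (Fin (ℓ + 1))) (t : ℝ),
      (∀ i, (if lam i < 0 then (1 - t) * b.repr y i else b.repr y i) = b.repr y i) →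
      m y t = y := by
    intro y t h
    have h2 : (fun i => if lam i < 0 then (1 - t) * b.repr y i else b.repr y i)
        = fun i => b.repr y i := funext h
    show b.repr.symm _ = y
    rw [h2]
    exact b.repr.symm_apply_apply y
  -- continuity
  have hc_cont : ∀ i, Continuous (fun y : EuclideanSpace ℝ (Fin (ℓ + 1)) => b.repr y i) := by
    intro i
    exact (continuous_apply i).comp ((PiLp.continuous_ofLp 2 _).comp b.repr.continuous)
  have hm_cont : Continuous (fun p : EuclideanSpace ℝ (Fin (ℓ + 1)) × ℝ => m p.1 p.2) := by
    apply b.repr.symm.continuous.comp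
    apply (PiLp.continuous_toLp 2 _).comp
    apply continuous_pi
    intro i
    by_cases h : lam i < 0
    · simp only [h, if_true]
      exact (continuous_const.sub continuous_snd).mul ((hc_cont i).comp continuous_fst)
    · simp only [h, if_false]
      exact (hc_cont i).comp continuous_fst
  -- membership of the normalized point in A
  have hmemA : ∀ (y : EuclideanSpace ℝ (Fin (ℓ + 1))) (t : ℝ), ‖y‖ = 1 → 0 ≤ Q y →
      0 ≤ t → t ≤ 1 → (‖m y t‖⁻¹ • m y t) ∈ A := by
    intro y t hy1 hQy ht0 ht1
    have hne : m y t ≠ 0 := hmzero y t hy1 hQy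
    have hnorm : ‖m y t‖ ≠ 0 := norm_ne_zero_iff.mpr hne
    constructor
    · rw [norm_smul, norm_inv, norm_norm, inv_mul_cancel₀ hnorm]
    · rw [hQsmul]
      exact mul_nonneg (sq_nonneg _) (le_trans hQy (hQm y t ht0 ht1))
  -- the homotopy H
  set Hfun : ↥A × I → ↥A := fun q =>
    ⟨‖m (q.1 : EuclideanSpace ℝ (Fin (ℓ + 1))) (q.2 : ℝ)‖⁻¹ •
      m (q.1 : EuclideanSpace ℝ (Fin (ℓ + 1))) (q.2 : ℝ),
      hmemA _ _ q.1.2.1 q.1.2.2 q.2.2.1 q.2.2.2⟩ with hHfun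
  have hG_cont : Continuous (fun q : ↥A × I =>
      m (q.1 : EuclideanSpace ℝ (Fin (ℓ + 1))) (q.2 : ℝ)) := by
    have hpair : Continuous (fun q : ↥A × I => ((q.1 : EuclideanSpace ℝ (Fin (ℓ + 1))), (q.2 : ℝ))) :=
      (continuous_subtype_val.comp continuous_fst).prodMk
        (continuous_subtype_val.comp continuous_snd)
    exact (hm_cont.comp hpair).congr (fun q => by simp only [Function.comp_apply])
  have hG_ne : ∀ q : ↥A × I, ‖m (q.1 : EuclideanSpace ℝ (Fin (ℓ + 1))) (q.2 : ℝ)‖ ≠ 0 :=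
    fun q => norm_ne_zero_iff.mpr (hmzero _ _ q.1.2.1 q.1.2.2)
  have hH_cont : Continuous Hfun := by
    apply Continuous.subtype_mk
    exact (hG_cont.norm.inv₀ hG_ne).smul hG_cont
  set H : C(↥A × I, ↥A) := ⟨Hfun, hH_cont⟩ with hH
  -- property 1 : H (p, 0) = p
  have prop1 : ∀ p : ↥A, H (p, 0) = p := by
    intro p
    apply Subtype.ext
    show ‖m (p : EuclideanSpace ℝ (Fin (ℓ + 1))) ((0 : I) : ℝ)‖⁻¹ •
      m (p : EuclideanSpace ℝ (Fin (ℓ + 1))) ((0 : I) : ℝ) = (p : EuclideanSpace ℝ (Fin (ℓ + 1)))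
    have h0 : ((0 : I) : ℝ) = 0 := rfl
    rw [h0, hm_id _ 0 (fun i => by split_ifs <;> ring), p.2.1]
    simp
  -- property 2 : H (p, 1) lands in LS
  have prop2 : ∀ p : ↥A, ((H (p, 1) : EuclideanSpace ℝ (Fin (ℓ + 1)))) ∈ LS := by
    intro p
    have h1 : ((1 : I) : ℝ) = 1 := rfl
    constructor
    · exact (hmemA _ _ p.2.1 p.2.2 (by rw [h1]; norm_num) (by rw [h1])).1
    · show ‖m _ _‖⁻¹ • m (p : EuclideanSpace ℝ (Fin (ℓ + 1))) ((1 : I) : ℝ) ∈ L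
      apply L.smul_mem
      rw [hLmem]
      intro i hi
      rw [hm_repr, if_pos hi, h1]
      ring
  -- property 3 : H fixes LS pointwise
  have prop3 : ∀ (p : ↥A) (t : I), (p : EuclideanSpace ℝ (Fin (ℓ + 1))) ∈ LS →
      H (p, t) = p := by
    intro p t hp
    apply Subtype.ext
    show ‖m _ _‖⁻¹ • m (p : EuclideanSpace ℝ (Fin (ℓ + 1))) (t : ℝ)
      = (p : EuclideanSpace ℝ (Fin (ℓ + 1)))
    have hfix : m (p : EuclideanSpace ℝ (Fin (ℓ + 1))) (t : ℝ)
        = (p : EuclideanSpace ℝ (Fin (ℓ + 1))) := by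
      apply hm_id
      intro i
      split_ifs with h
      · rw [(hLmem _).1 hp.2 i h]; ring
      · rfl
    rw [hfix, hp.1]
    simp
  refine ⟨⟨H, prop1, prop2, prop3⟩, ?_⟩
  -- LS is contained in A
  have hLSA : LS ⊆ A := by
    intro y hy
    refine ⟨hy.1, ?_⟩
    rw [hQ]
    refine Finset.sum_nonneg fun i _ => ?_
    by_cases h : lam i < 0
    · rw [(hLmem _).1 hy.2 i h]; simp
    · exact mul_nonneg (not_lt.1 h) (sq_nonneg _)
  -- the retraction as a continuous map A → LS
  set f : C(↥A, ↥LS) :=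
    ⟨fun p => ⟨(H (p, 1) : EuclideanSpace ℝ (Fin (ℓ + 1))), prop2 p⟩, by
      apply Continuous.subtype_mk
      exact continuous_subtype_val.comp
        (H.continuous.comp (continuous_id.prodMk continuous_const))⟩ with hf
  set incl : C(↥LS, ↥A) :=
    ⟨fun p => ⟨(p : EuclideanSpace ℝ (Fin (ℓ + 1))), hLSA p.2⟩,
      continuous_subtype_val.subtype_mk _⟩ with hincl
  have hhom : ContinuousMap.Homotopy (ContinuousMap.id ↥A) (incl.comp f) :=
    { toContinuousMap := ⟨fun q => H (q.2, q.1),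
        H.continuous.comp (continuous_snd.prodMk continuous_fst)⟩
      map_zero_left := prop1
      map_one_left := fun p => Subtype.ext rfl }
  have hfg : f.comp incl = ContinuousMap.id ↥LS := by
    apply ContinuousMap.ext
    intro p
    have h := prop3 (incl p) 1 p.2
    have hval : ((H (incl p, 1) : ↥A) : EuclideanSpace ℝ (Fin (ℓ + 1)))
        = (p : EuclideanSpace ℝ (Fin (ℓ + 1))) := congrArg Subtype.val h
    exact Subtype.ext hval
  have equiv1 : ContinuousMap.HomotopyEquiv ↥A ↥LS :=
    { toFun := f
      invFun := incl
      left_inv := ⟨hhom.symm⟩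
      right_inv := by rw [hfg] }
  -- dimension count
  set S : Finset (Fin (ℓ + 1)) := Finset.univ.filter (fun i => 0 ≤ lam i) with hS
  have hLspan : L = Submodule.span ℝ (b '' ↑S) := by
    rw [show L = Submodule.span ℝ (b '' {i | 0 ≤ lam i}) from by rw [← hLset]]
    congr 1
    ext i
    simp [hS]
  have hScard : S.card = ℓ - j + 1 := by
    have hsplit := Finset.card_filter_add_card_filter_not
      (s := Finset.univ) (p := fun i : Fin (ℓ + 1) => lam i < 0)
    have hcompl : (Finset.univ.filter (fun i : Fin (ℓ + 1) => ¬ lam i < 0)) = S := by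
      ext i; simp [hS, not_lt]
    rw [hj, hcompl, Finset.card_univ, Fintype.card_fin] at hsplit
    omega
  have hrank : Module.finrank ℝ ↥L = ℓ - j + 1 := by
    rw [hLspan, aux_finrank b S, hScard]
  -- isometry from L to the model space
  set φ : ↥L ≃ₗᵢ[ℝ] EuclideanSpace ℝ (Fin (ℓ - j + 1)) :=
    ((stdOrthonormalBasis ℝ ↥L).reindex (finCongr hrank)).repr with hφ
  -- homeomorphism between LS and the sphere
  have homeo : ↥LS ≃ₜ ↥(Metric.sphere (0 : EuclideanSpace ℝ (Fin (ℓ - j + 1))) 1) :=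
    { toFun := fun p => ⟨φ ⟨(p : EuclideanSpace ℝ (Fin (ℓ + 1))), p.2.2⟩, by
        rw [mem_sphere_zero_iff_norm, φ.norm_map]
        exact p.2.1⟩
      invFun := fun w => ⟨((φ.symm w : ↥L) : EuclideanSpace ℝ (Fin (ℓ + 1))), by
        constructor
        · have : ‖φ.symm w‖ = 1 := by
            rw [φ.symm.norm_map]
            exact mem_sphere_zero_iff_norm.1 w.2
          exact this
        · exact (φ.symm w).2⟩
      left_inv := fun p => by
        apply Subtype.ext
        show ((φ.symm (φ ⟨_, _⟩) : ↥L) : EuclideanSpace ℝ (Fin (ℓ + 1))) = _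
        rw [φ.symm_apply_apply]
      right_inv := fun w => by
        apply Subtype.ext
        show φ ⟨((φ.symm w : ↥L) : EuclideanSpace ℝ (Fin (ℓ + 1))), _⟩ = _
        have : (⟨((φ.symm w : ↥L) : EuclideanSpace ℝ (Fin (ℓ + 1))), (φ.symm w).2⟩ : ↥L)
            = φ.symm w := Subtype.ext rfl
        rw [this, φ.apply_symm_apply]
      continuous_toFun := by
        apply Continuous.subtype_mk
        exact φ.continuous.comp (continuous_subtype_val.subtype_mk _)
      continuous_invFun := by
        apply Continuous.subtype_mk
        exact continuous_subtype_val.comp (φ.symm.continuous.comp continuous_subtype_val) }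
  exact ⟨equiv1.trans homeo.toHomotopyEquiv⟩
end

section
/- Let A₁, …, A_n be subcomplexes of a finite simplicial complex A with A = A₁ ∪ ⋯ ∪ A_n, such that each A_i is connected (H⁰(A_i) = ℚ) and H¹(A_i) = 0 for all i. Identify H⁰ of a complex with the space of locally constant ℚ-valued functions, and define δ₀ : ⊕_i H⁰(A_i) → ⊕_{i<j} H⁰(A_i ∩ A_j) by (δ₀φ)_{ij} = φ_i|_{A_{ij}} − φ_j|_{A_{ij}}, and δ₁ : ⊕_{i<j} H⁰(A_{ij}) → ⊕_{i<j<ℓ} H⁰(A_{ijℓ}) by (δ₁ψ)_{ijℓ} = ψ_{ij}| − ψ_{iℓ}| + ψ_{jℓ}| restricted to A_{ijℓ}. Then b₀(A) = dim ker(δ₀) and b₁(A) = dim ker(δ₁) − dim im(δ₀). -/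
variable {V : Type} [Fintype V] [LinearOrder V]

/-- `K` is a (finite, abstract) simplicial complex. -/
def IsCplx (K : Finset (Finset V)) : Prop :=
  (∀ s ∈ K, s.Nonempty) ∧ ∀ s ∈ K, ∀ t ⊆ s, t.Nonempty → t ∈ K

/-- The `p`-dimensional faces of `K`. -/
def pfaces (K : Finset (Finset V)) (p : ℕ) : Finset (Finset V) :=
  K.filter fun s => s.card = p + 1

/-- Simplicial `p`-chains of `K` with `ℚ` coefficients. -/
abbrev ChnQ (K : Finset (Finset V)) (p : ℕ) : Type _ :=
  ↥(pfaces K p) → ℚ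

/-- The sign `(−1)^r` where `r` is the position of the unique vertex of `s \ t` among the
(ordered) vertices of `s`; this is the incidence coefficient of the facet `t` of `s`. -/
def sgn (s t : Finset V) : ℚ :=
  ∑ v ∈ s \ t, (-1 : ℚ) ^ (s.filter fun w => w < v).card

/-- The simplicial boundary map `∂ : C_{p+1}(K; ℚ) → C_p(K; ℚ)` (with the usual signs coming
from the linear order on the vertices). -/
noncomputable def bdryQ (K : Finset (Finset V)) (p : ℕ) :
    ChnQ K (p + 1) →ₗ[ℚ] ChnQ K p where
  toFun c t := ∑ s : ↥(pfaces K (p + 1)),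
    if (t : Finset V) ⊆ (s : Finset V) then sgn (s : Finset V) (t : Finset V) * c s else 0
  map_add' c d := by
    funext t
    simp only [Pi.add_apply]
    rw [← Finset.sum_add_distrib]
    refine Finset.sum_congr rfl fun s _ => ?_
    split
    · ring
    · simp
  map_smul' a c := by
    funext t
    simp only [Pi.smul_apply, RingHom.id_apply]
    rw [Finset.smul_sum]
    refine Finset.sum_congr rfl fun s _ => ?_
    split
    · simp only [Pi.smul_apply, smul_eq_mul]; ring
    · simp

/-- The `i`-th Betti number of `K` with `ℚ` coefficients, as `dim ker ∂_i − dim im ∂_{i+1}`. -/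
noncomputable def bettiQ (K : Finset (Finset V)) : ℕ → ℤ
  | 0 => (Module.finrank ℚ (ChnQ K 0) : ℤ) -
      (Module.finrank ℚ (LinearMap.range (bdryQ K 0)) : ℤ)
  | (i + 1) => (Module.finrank ℚ (LinearMap.ker (bdryQ K i)) : ℤ) -
      (Module.finrank ℚ (LinearMap.range (bdryQ K (i + 1))) : ℤ)

/-- The vertex set of `K`. -/
def verts (K : Finset (Finset V)) : Finset V := K.sup id

/-- `H⁰(K; ℚ)`, realized as the space of locally constant functions on `K`: functions on the
vertices of `K` (extended by `0` elsewhere) that are constant on every simplex of `K`. -/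
def LCset (K : Finset (Finset V)) : Submodule ℚ (V → ℚ) where
  carrier := {g | (∀ v, v ∉ verts K → g v = 0) ∧
    ∀ s ∈ K, ∀ v ∈ s, ∀ w ∈ s, g v = g w}
  add_mem' := by
    rintro a b ⟨ha1, ha2⟩ ⟨hb1, hb2⟩
    exact ⟨fun v hv => by simp [Pi.add_apply, ha1 v hv, hb1 v hv],
      fun s hs v hv w hw => by simp [Pi.add_apply, ha2 s hs v hv w hw, hb2 s hs v hv w hw]⟩
  zero_mem' := ⟨fun _ _ => rfl, fun _ _ _ _ _ _ => rfl⟩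
  smul_mem' := by
    rintro a g ⟨hg1, hg2⟩
    exact ⟨fun v hv => by simp [hg1 v hv], fun s hs v hv w hw => by simp [hg2 s hs v hv w hw]⟩

/-- The restriction map on locally constant functions, for a subcomplex `K' ⊆ K`. -/
noncomputable def rst (K K' : Finset (Finset V)) (h : K' ⊆ K) :
    ↥(LCset K) →ₗ[ℚ] ↥(LCset K') where
  toFun g := ⟨fun v => if v ∈ verts K' then (g : V → ℚ) v else 0, by
    constructor
    · intro v hv
      simp [hv]
    · intro s hs v hv w hw
      have hsub : s ⊆ verts K' := Finset.le_sup (f := id) hs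
      simp only []
      rw [if_pos (hsub hv), if_pos (hsub hw)]
      exact g.2.2 s (h hs) v hv w hw⟩
  map_add' g g' := by
    apply Subtype.ext
    funext v
    by_cases hv : v ∈ verts K' <;> simp [hv]
  map_smul' a g := by
    apply Subtype.ext
    funext v
    by_cases hv : v ∈ verts K' <;> simp [hv]

/-- The generalized restriction homomorphism
`δ₀ : ⊕ᵢ H⁰(Aᵢ) → ⊕_{i<j} H⁰(Aᵢ ∩ Aⱼ)`. -/
noncomputable def delta0 {n : ℕ} (A : Fin n → Finset (Finset V)) :
    (∀ i : Fin n, ↥(LCset (A i))) →ₗ[ℚ]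
      (∀ p : {p : Fin n × Fin n // p.1 < p.2}, ↥(LCset (A p.1.1 ∩ A p.1.2))) where
  toFun φ p :=
    rst (A p.1.1) (A p.1.1 ∩ A p.1.2) Finset.inter_subset_left (φ p.1.1) -
      rst (A p.1.2) (A p.1.1 ∩ A p.1.2) Finset.inter_subset_right (φ p.1.2)
  map_add' φ ψ := by
    funext p
    simp only [Pi.add_apply, map_add]
    abel
  map_smul' a φ := by
    funext p
    simp only [Pi.smul_apply, map_smul, RingHom.id_apply, smul_sub]

/-- The generalized restriction homomorphism
`δ₁ : ⊕_{i<j} H⁰(Aᵢ ∩ Aⱼ) → ⊕_{i<j<l} H⁰(Aᵢ ∩ Aⱼ ∩ A_l)`. -/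
noncomputable def delta1 {n : ℕ} (A : Fin n → Finset (Finset V)) :
    (∀ p : {p : Fin n × Fin n // p.1 < p.2}, ↥(LCset (A p.1.1 ∩ A p.1.2))) →ₗ[ℚ]
      (∀ t : {t : Fin n × Fin n × Fin n // t.1 < t.2.1 ∧ t.2.1 < t.2.2},
        ↥(LCset (A t.1.1 ∩ A t.1.2.1 ∩ A t.1.2.2))) where
  toFun ψ t :=
    rst _ _ (Finset.inter_subset_left) (ψ ⟨(t.1.1, t.1.2.1), t.2.1⟩) -
      rst (A t.1.1 ∩ A t.1.2.2) _
        (by intro x hx; simp only [Finset.mem_inter] at hx ⊢; exact ⟨hx.1.1, hx.2⟩)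
        (ψ ⟨(t.1.1, t.1.2.2), lt_trans t.2.1 t.2.2⟩) +
      rst (A t.1.2.1 ∩ A t.1.2.2) _
        (by intro x hx; simp only [Finset.mem_inter] at hx ⊢; exact ⟨hx.1.2, hx.2⟩)
        (ψ ⟨(t.1.2.1, t.1.2.2), t.2.2⟩)
  map_add' φ ψ := by
    funext t
    simp only [Pi.add_apply, map_add]
    abel
  map_smul' a φ := by
    funext t
    simp only [Pi.smul_apply, map_smul, RingHom.id_apply, smul_sub, smul_add]

set_option linter.unusedSectionVars false
set_option maxHeartbeats 1000000

noncomputable section Aux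
open Module

lemma mem_pfaces {K : Finset (Finset V)} {q : ℕ} {t : Finset V} :
    t ∈ pfaces K q ↔ t ∈ K ∧ t.card = q + 1 := by simp [pfaces]

lemma pfaces_mono {K K' : Finset (Finset V)} (h : K' ⊆ K) (q : ℕ) :
    pfaces K' q ⊆ pfaces K q := by
  intro t ht; rw [mem_pfaces] at *; exact ⟨h ht.1, ht.2⟩

def resC {K K' : Finset (Finset V)} (h : K' ⊆ K) (q : ℕ) : ChnQ K q →ₗ[ℚ] ChnQ K' q where
  toFun f t := f ⟨t.1, pfaces_mono h q t.2⟩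
  map_add' _ _ := rfl
  map_smul' _ _ := rfl

lemma resC_apply {K K' : Finset (Finset V)} (h : K' ⊆ K) (q : ℕ) (f : ChnQ K q)
    (t : ↥(pfaces K' q)) : resC h q f t = f ⟨t.1, pfaces_mono h q t.2⟩ := rfl

lemma resC_resC {K K' K'' : Finset (Finset V)} (h : K' ⊆ K) (h' : K'' ⊆ K') (q : ℕ)
    (f : ChnQ K q) : resC h' q (resC h q f) = resC (h'.trans h) q f := rfl

def cob (K : Finset (Finset V)) (q : ℕ) : ChnQ K q →ₗ[ℚ] ChnQ K (q + 1) where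
  toFun f s := ∑ t : ↥(pfaces K q),
    if (t : Finset V) ⊆ (s : Finset V) then sgn (s : Finset V) (t : Finset V) * f t else 0
  map_add' c d := by
    funext s
    simp only [Pi.add_apply]
    rw [← Finset.sum_add_distrib]
    refine Finset.sum_congr rfl fun t _ => ?_
    split
    · ring
    · simp
  map_smul' a c := by
    funext s
    simp only [Pi.smul_apply, RingHom.id_apply]
    rw [Finset.smul_sum]
    refine Finset.sum_congr rfl fun t _ => ?_
    split
    · simp only [Pi.smul_apply, smul_eq_mul]; ring
    · simp

lemma cob_apply (K : Finset (Finset V)) (q : ℕ) (f : ChnQ K q) (s : ↥(pfaces K (q+1))) :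
    cob K q f s = ∑ t : ↥(pfaces K q),
      if (t : Finset V) ⊆ (s : Finset V) then sgn (s : Finset V) (t : Finset V) * f t else 0 := rfl

theorem rank_eq_toMatrix' {m n : Type} [Fintype m] [Fintype n] [DecidableEq m] [DecidableEq n]
    (f : (n → ℚ) →ₗ[ℚ] (m → ℚ)) :
    Module.finrank ℚ (LinearMap.range f) = (LinearMap.toMatrix' f).rank := by
  rw [Matrix.rank, ← Matrix.toLin'_apply', Matrix.toLin'_toMatrix']

lemma toMatrix'_bdryQ (K : Finset (Finset V)) (q : ℕ) :
    LinearMap.toMatrix' (bdryQ K q) = (LinearMap.toMatrix' (cob K q)).transpose := by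
  ext t s
  rw [Matrix.transpose_apply, LinearMap.toMatrix'_apply, LinearMap.toMatrix'_apply]
  show bdryQ K q _ t = cob K q _ s
  simp only [bdryQ, cob, LinearMap.coe_mk, AddHom.coe_mk]
  rw [Finset.sum_eq_single s (fun b _ hb => by split <;> simp [hb])
      (by intro h; exact absurd (Finset.mem_univ s) h),
    Finset.sum_eq_single t (fun b _ hb => by split <;> simp [hb])
      (by intro h; exact absurd (Finset.mem_univ t) h)]
  simp

lemma rank_cob_eq (K : Finset (Finset V)) (q : ℕ) :
    finrank ℚ (LinearMap.range (cob K q)) = finrank ℚ (LinearMap.range (bdryQ K q)) := by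
  rw [rank_eq_toMatrix', rank_eq_toMatrix', toMatrix'_bdryQ, Matrix.rank_transpose]


lemma sgn_of_sdiff_singleton {s t : Finset V} {v : V} (h : s \ t = {v}) :
    sgn s t = (-1 : ℚ) ^ (s.filter fun w => w < v).card := by
  rw [sgn, h, Finset.sum_singleton]

lemma sgn_pair_cancel {s u : Finset V} (hu : u ⊆ s) {a b : V} (hab : s \ u = {a, b})
    (hlt : a < b) :
    sgn s (insert b u) * sgn (insert b u) u + sgn s (insert a u) * sgn (insert a u) u = 0 := by
  have hane : a ≠ b := ne_of_lt hlt
  have ha : a ∈ s \ u := by rw [hab]; simp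
  have hb : b ∈ s \ u := by rw [hab]; simp
  rw [Finset.mem_sdiff] at ha hb
  have hs1 : s \ insert b u = {a} := by
    ext x
    simp only [Finset.mem_sdiff, Finset.mem_insert, Finset.mem_singleton]
    constructor
    · rintro ⟨hxs, hx⟩
      push_neg at hx
      have : x ∈ s \ u := Finset.mem_sdiff.2 ⟨hxs, hx.2⟩
      rw [hab] at this
      simp only [Finset.mem_insert, Finset.mem_singleton] at this
      tauto
    · rintro rfl
      exact ⟨ha.1, by push_neg; exact ⟨hane, ha.2⟩⟩
  have hs2 : s \ insert a u = {b} := by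
    ext x
    simp only [Finset.mem_sdiff, Finset.mem_insert, Finset.mem_singleton]
    constructor
    · rintro ⟨hxs, hx⟩
      push_neg at hx
      have : x ∈ s \ u := Finset.mem_sdiff.2 ⟨hxs, hx.2⟩
      rw [hab] at this
      simp only [Finset.mem_insert, Finset.mem_singleton] at this
      tauto
    · rintro rfl
      exact ⟨hb.1, by push_neg; exact ⟨hane.symm, hb.2⟩⟩
  have hsb : (insert b u) \ u = {b} := by
    ext x
    simp only [Finset.mem_sdiff, Finset.mem_insert, Finset.mem_singleton]
    constructor
    · rintro ⟨hx1, hx2⟩; tauto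
    · rintro rfl; exact ⟨Or.inl rfl, hb.2⟩
  have hsa : (insert a u) \ u = {a} := by
    ext x
    simp only [Finset.mem_sdiff, Finset.mem_insert, Finset.mem_singleton]
    constructor
    · rintro ⟨hx1, hx2⟩; tauto
    · rintro rfl; exact ⟨Or.inl rfl, ha.2⟩
  have hfa : s.filter (fun w => w < a) = u.filter (fun w => w < a) := by
    ext x
    simp only [Finset.mem_filter]
    constructor
    · rintro ⟨hx1, hx2⟩
      refine ⟨?_, hx2⟩
      by_contra hxu
      have : x ∈ s \ u := Finset.mem_sdiff.2 ⟨hx1, hxu⟩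
      rw [hab] at this
      simp only [Finset.mem_insert, Finset.mem_singleton] at this
      rcases this with rfl | rfl
      · exact absurd hx2 (lt_irrefl _)
      · exact absurd (hlt.trans hx2) (lt_irrefl _)
    · rintro ⟨hx1, hx2⟩; exact ⟨hu hx1, hx2⟩
  have hfb : s.filter (fun w => w < b) = insert a (u.filter (fun w => w < b)) := by
    ext x
    simp only [Finset.mem_filter, Finset.mem_insert]
    constructor
    · rintro ⟨hx1, hx2⟩
      by_cases hxu : x ∈ u
      · exact Or.inr ⟨hxu, hx2⟩
      · have : x ∈ s \ u := Finset.mem_sdiff.2 ⟨hx1, hxu⟩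
        rw [hab] at this
        simp only [Finset.mem_insert, Finset.mem_singleton] at this
        rcases this with rfl | rfl
        · exact Or.inl rfl
        · exact absurd hx2 (lt_irrefl _)
    · rintro (rfl | ⟨hx1, hx2⟩)
      · exact ⟨ha.1, hlt⟩
      · exact ⟨hu hx1, hx2⟩
  have hfib : (insert b u).filter (fun w => w < b) = u.filter (fun w => w < b) := by
    rw [Finset.filter_insert, if_neg (lt_irrefl b)]
  have hfia : (insert a u).filter (fun w => w < a) = u.filter (fun w => w < a) := by
    rw [Finset.filter_insert, if_neg (lt_irrefl a)]
  have hcb : (s.filter (fun w => w < b)).card = (u.filter (fun w => w < b)).card + 1 := by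
    rw [hfb, Finset.card_insert_of_notMem (by simp [ha.2])]
  rw [sgn_of_sdiff_singleton hs1, sgn_of_sdiff_singleton hs2, sgn_of_sdiff_singleton hsb,
    sgn_of_sdiff_singleton hsa, hfib, hfia, hfa, hcb, pow_succ]
  ring

lemma subset_mem_pfaces {K : Finset (Finset V)} (hK : IsCplx K) {s t : Finset V} {q : ℕ}
    (hs : s ∈ K) (hts : t ⊆ s) (hcard : t.card = q + 1) : t ∈ pfaces K q :=
  mem_pfaces.2 ⟨hK.2 s hs t hts (Finset.card_pos.mp (by omega)), hcard⟩

lemma cob_cob {K : Finset (Finset V)} (hK : IsCplx K) (q : ℕ) (f : ChnQ K q) :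
    cob K (q + 1) (cob K q f) = 0 := by
  funext s
  rw [cob_apply, Pi.zero_apply]
  have step : ∀ t : ↥(pfaces K (q+1)),
      (if (t : Finset V) ⊆ (s : Finset V) then sgn s.1 t.1 * cob K q f t else 0)
      = ∑ u : ↥(pfaces K q), if (u : Finset V) ⊆ (t : Finset V) ∧ (t : Finset V) ⊆ (s : Finset V)
          then sgn s.1 t.1 * sgn t.1 u.1 * f u else 0 := by
    intro t
    rw [cob_apply]
    split
    case isTrue h =>
      rw [Finset.mul_sum]
      refine Finset.sum_congr rfl fun u _ => ?_
      by_cases hu : (u : Finset V) ⊆ (t : Finset V)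
      · rw [if_pos hu, if_pos ⟨hu, h⟩, mul_assoc]
      · rw [if_neg hu, if_neg (fun hc => hu hc.1), mul_zero]
    case isFalse h =>
      rw [eq_comm]
      exact Finset.sum_eq_zero fun u _ => if_neg (fun hc => h hc.2)
  rw [Finset.sum_congr rfl (fun t _ => step t), Finset.sum_comm]
  refine Finset.sum_eq_zero fun u _ => ?_
  by_cases hus : (u : Finset V) ⊆ (s : Finset V)
  · -- the two-element cancellation
    have hsK : (s : Finset V) ∈ K := (mem_pfaces.1 s.2).1
    have hscard : (s : Finset V).card = q + 3 := (mem_pfaces.1 s.2).2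
    have hucard : (u : Finset V).card = q + 1 := (mem_pfaces.1 u.2).2
    have hdcard : ((s : Finset V) \ (u : Finset V)).card = 2 := by
      rw [Finset.card_sdiff_of_subset hus, hscard, hucard]; omega
    obtain ⟨x, y, hxy, hpair⟩ := Finset.card_eq_two.1 hdcard
    -- order them
    obtain ⟨a, b, hab, hpair⟩ : ∃ a b, a < b ∧ (s : Finset V) \ (u : Finset V) = {a, b} := by
      rcases lt_or_gt_of_ne hxy with h | h
      · exact ⟨x, y, h, hpair⟩
      · exact ⟨y, x, h, by rw [hpair, Finset.pair_comm]⟩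
    have hane : a ≠ b := ne_of_lt hab
    have hams : a ∈ (s : Finset V) \ (u : Finset V) := by rw [hpair]; simp
    have hbms : b ∈ (s : Finset V) \ (u : Finset V) := by rw [hpair]; simp
    rw [Finset.mem_sdiff] at hams hbms
    have hia : insert a (u : Finset V) ∈ pfaces K (q + 1) :=
      subset_mem_pfaces hK hsK (Finset.insert_subset hams.1 hus)
        (by rw [Finset.card_insert_of_notMem hams.2, hucard])
    have hib : insert b (u : Finset V) ∈ pfaces K (q + 1) :=
      subset_mem_pfaces hK hsK (Finset.insert_subset hbms.1 hus)
        (by rw [Finset.card_insert_of_notMem hbms.2, hucard])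
    have hTeq : (Finset.univ.filter (fun t : ↥(pfaces K (q+1)) =>
        (u : Finset V) ⊆ (t : Finset V) ∧ (t : Finset V) ⊆ (s : Finset V)))
        = {⟨insert b (u : Finset V), hib⟩, ⟨insert a (u : Finset V), hia⟩} := by
      ext t
      simp only [Finset.mem_filter, Finset.mem_univ, true_and, Finset.mem_insert,
        Finset.mem_singleton]
      constructor
      · rintro ⟨hut, hts⟩
        have htcard : (t : Finset V).card = q + 2 := (mem_pfaces.1 t.2).2
        have hd1 : ((t : Finset V) \ (u : Finset V)).card = 1 := by
          rw [Finset.card_sdiff_of_subset hut, htcard, hucard]; omega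
        obtain ⟨z, hz⟩ := Finset.card_eq_one.1 hd1
        have hzmem : z ∈ (s : Finset V) \ (u : Finset V) := by
          have : z ∈ (t : Finset V) \ (u : Finset V) := by rw [hz]; simp
          rw [Finset.mem_sdiff] at this ⊢
          exact ⟨hts this.1, this.2⟩
        have hteq : (t : Finset V) = insert z (u : Finset V) := by
          have := Finset.sdiff_union_of_subset hut
          rw [hz] at this
          rw [← this, ← Finset.insert_eq]
        rw [hpair] at hzmem
        simp only [Finset.mem_insert, Finset.mem_singleton] at hzmem
        rcases hzmem with rfl | rfl
        · exact Or.inr (Subtype.ext hteq)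
        · exact Or.inl (Subtype.ext hteq)
      · rintro (rfl | rfl)
        · exact ⟨Finset.subset_insert _ _, Finset.insert_subset hbms.1 hus⟩
        · exact ⟨Finset.subset_insert _ _, Finset.insert_subset hams.1 hus⟩
    rw [← Finset.sum_filter, hTeq, Finset.sum_pair (by
      intro hc
      apply hbms.2
      have : b ∈ insert b (u : Finset V) := by simp
      rw [show insert b (u : Finset V) = insert a (u : Finset V) from congrArg Subtype.val hc] at this
      simp only [Finset.mem_insert] at this
      rcases this with h | h
      · exact absurd h hane.symm
      · exact h)]
    have := sgn_pair_cancel hus hpair hab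
    show sgn s.1 _ * sgn _ u.1 * f u + sgn s.1 _ * sgn _ u.1 * f u = 0
    rw [← add_mul, this, zero_mul]
  · exact Finset.sum_eq_zero fun t _ => if_neg (fun hc => hus (hc.1.trans hc.2))

lemma cob_resC {K K' : Finset (Finset V)} (hK' : IsCplx K') (h : K' ⊆ K) (q : ℕ) (f : ChnQ K q) :
    cob K' q (resC h q f) = resC h (q + 1) (cob K q f) := by
  funext s
  rw [cob_apply, resC_apply, cob_apply]
  have hsK' : (s : Finset V) ∈ K' := (mem_pfaces.1 s.2).1
  have hcd : ∀ x : Finset V, x ⊆ (s : Finset V) → x.card = q + 1 → x ∈ pfaces K' q :=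
    fun x h1 h2 => subset_mem_pfaces hK' hsK' h1 h2
  set F : Finset V → ℚ := fun x => if hx : x ∈ pfaces K q then
      (if x ⊆ (s : Finset V) then sgn (s : Finset V) x * f ⟨x, hx⟩ else 0) else 0 with hF
  have e1 : ∑ t : ↥(pfaces K' q),
      (if (t : Finset V) ⊆ (s : Finset V) then sgn (s : Finset V) (t : Finset V) * resC h q f t else 0)
      = ∑ x ∈ pfaces K' q, F x := by
    rw [← Finset.sum_coe_sort (pfaces K' q) F]
    refine Finset.sum_congr rfl fun t _ => ?_
    simp only [hF]
    rw [dif_pos (pfaces_mono h q t.2)]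
    rfl
  have e2 : ∑ t : ↥(pfaces K q),
      (if (t : Finset V) ⊆ (s : Finset V) then sgn (s : Finset V) (t : Finset V) * f t else 0)
      = ∑ x ∈ pfaces K q, F x := by
    rw [← Finset.sum_coe_sort (pfaces K q) F]
    refine Finset.sum_congr rfl fun t _ => ?_
    simp only [hF]
    rw [dif_pos t.2]
  rw [e1, e2]
  refine Finset.sum_subset (pfaces_mono h q) fun x hx hx' => ?_
  simp only [hF]
  rw [dif_pos hx, if_neg]
  intro hc
  exact hx' (hcd x hc (mem_pfaces.1 hx).2)

lemma IsCplx.inter {K K' : Finset (Finset V)} (hK : IsCplx K) (hK' : IsCplx K') :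
    IsCplx (K ∩ K') := by
  constructor
  · intro s hs; exact hK.1 s (Finset.mem_inter.1 hs).1
  · intro s hs t hts htne
    rw [Finset.mem_inter] at hs ⊢
    exact ⟨hK.2 s hs.1 t hts htne, hK'.2 s hs.2 t hts htne⟩

lemma IsCplx.biUnion {n : ℕ} (A : Fin n → Finset (Finset V)) (hA : ∀ i, IsCplx (A i)) :
    IsCplx (Finset.univ.biUnion A) := by
  constructor
  · intro s hs
    obtain ⟨i, _, hi⟩ := Finset.mem_biUnion.1 hs
    exact (hA i).1 s hi
  · intro s hs t hts htne
    obtain ⟨i, _, hi⟩ := Finset.mem_biUnion.1 hs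
    exact Finset.mem_biUnion.2 ⟨i, Finset.mem_univ i, (hA i).2 s hi t hts htne⟩

lemma verts_mono {K K' : Finset (Finset V)} (h : K' ⊆ K) : verts K' ⊆ verts K := by
  intro v hv
  rw [verts, Finset.mem_sup] at hv ⊢
  obtain ⟨s, hs, hv⟩ := hv
  exact ⟨s, h hs, hv⟩

lemma mem_verts {K : Finset (Finset V)} {v : V} :
    v ∈ verts K ↔ ∃ s ∈ K, v ∈ s := by
  simp [verts, Finset.mem_sup]

lemma singleton_mem_pfaces {K : Finset (Finset V)} (hK : IsCplx K) {v : V}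
    (hv : v ∈ verts K) : ({v} : Finset V) ∈ pfaces K 0 := by
  obtain ⟨s, hs, hvs⟩ := mem_verts.1 hv
  exact subset_mem_pfaces hK hs (Finset.singleton_subset_iff.2 hvs) (Finset.card_singleton v)

/-- The comparison map from locally constant functions to 0-cochains. -/
def jmap (K : Finset (Finset V)) : ↥(LCset K) →ₗ[ℚ] ChnQ K 0 where
  toFun g t := ∑ v ∈ (t : Finset V), (g : V → ℚ) v
  map_add' g g' := by funext t; simp [Finset.sum_add_distrib]
  map_smul' a g := by funext t; simp [Finset.mul_sum]

lemma jmap_apply (K : Finset (Finset V)) (g : ↥(LCset K)) (t : ↥(pfaces K 0)) :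
    jmap K g t = ∑ v ∈ (t : Finset V), (g : V → ℚ) v := rfl

lemma jmap_singleton (K : Finset (Finset V)) (g : ↥(LCset K)) (t : ↥(pfaces K 0))
    {v : V} (hv : (t : Finset V) = {v}) : jmap K g t = (g : V → ℚ) v := by
  rw [jmap_apply, hv, Finset.sum_singleton]

lemma jmap_inj {K : Finset (Finset V)} (hK : IsCplx K) : Function.Injective (jmap K) := by
  intro g g' hgg
  apply Subtype.ext
  funext v
  by_cases hv : v ∈ verts K
  · have ht := singleton_mem_pfaces hK hv
    have := congrFun hgg ⟨{v}, ht⟩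
    rwa [jmap_singleton K g ⟨{v}, ht⟩ rfl, jmap_singleton K g' ⟨{v}, ht⟩ rfl] at this
  · rw [g.2.1 v hv, g'.2.1 v hv]

lemma cob_edge {L : Finset (Finset V)} (f : ChnQ L 0) (e : ↥(pfaces L 1)) {v w : V}
    (hvw : v < w) (he : (e : Finset V) = {v, w})
    (hv : ({v} : Finset V) ∈ pfaces L 0) (hw : ({w} : Finset V) ∈ pfaces L 0) :
    cob L 0 f e = f ⟨{w}, hw⟩ - f ⟨{v}, hv⟩ := by
  have hne : v ≠ w := ne_of_lt hvw
  rw [cob_apply, ← Finset.sum_filter]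
  have hfil : Finset.univ.filter (fun t : ↥(pfaces L 0) => (t : Finset V) ⊆ (e : Finset V))
      = {⟨{v}, hv⟩, ⟨{w}, hw⟩} := by
    ext t
    simp only [Finset.mem_filter, Finset.mem_univ, true_and, Finset.mem_insert,
      Finset.mem_singleton]
    constructor
    · intro ht
      obtain ⟨x, hx⟩ := Finset.card_eq_one.1 (mem_pfaces.1 t.2).2
      have hxe : x ∈ (e : Finset V) := ht (by rw [hx]; simp)
      rw [he] at hxe
      simp only [Finset.mem_insert, Finset.mem_singleton] at hxe
      rcases hxe with rfl | rfl
      · exact Or.inl (Subtype.ext hx)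
      · exact Or.inr (Subtype.ext hx)
    · rintro (rfl | rfl) <;> simp only [he] <;> intro x hx <;>
        simp only [Finset.mem_singleton] at hx <;> simp [hx]
  rw [hfil, Finset.sum_pair (fun hc => hne (by
    have := congrArg Subtype.val hc
    simpa using this))]
  have hd1 : (e : Finset V) \ {v} = {w} := by
    rw [he]
    ext x
    simp only [Finset.mem_sdiff, Finset.mem_insert, Finset.mem_singleton]
    constructor
    · rintro ⟨h1 | h1, h2⟩ <;> tauto
    · rintro rfl; exact ⟨Or.inr rfl, hne.symm⟩
  have hd2 : (e : Finset V) \ {w} = {v} := by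
    rw [he]
    ext x
    simp only [Finset.mem_sdiff, Finset.mem_insert, Finset.mem_singleton]
    constructor
    · rintro ⟨h1 | h1, h2⟩ <;> tauto
    · rintro rfl; exact ⟨Or.inl rfl, hne⟩
  have hf1 : (e : Finset V).filter (fun x => x < w) = {v} := by
    rw [he]
    ext x
    simp only [Finset.mem_filter, Finset.mem_insert, Finset.mem_singleton]
    constructor
    · rintro ⟨h1 | h1, h2⟩
      · exact h1
      · subst h1; exact absurd h2 (lt_irrefl _)
    · rintro rfl; exact ⟨Or.inl rfl, hvw⟩
  have hf2 : (e : Finset V).filter (fun x => x < v) = ∅ := by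
    rw [he]
    ext x
    simp only [Finset.mem_filter, Finset.mem_insert, Finset.mem_singleton,
      Finset.notMem_empty, iff_false, not_and]
    rintro (rfl | rfl)
    · exact lt_irrefl _
    · intro hc; exact absurd (hvw.trans hc) (lt_irrefl _)
  have hsv : sgn (e : Finset V) {v} = -1 := by
    rw [sgn_of_sdiff_singleton hd1, hf1, Finset.card_singleton, pow_one]
  have hsw : sgn (e : Finset V) {w} = 1 := by
    rw [sgn_of_sdiff_singleton hd2, hf2, Finset.card_empty, pow_zero]
  show sgn (e : Finset V) {v} * f ⟨{v}, hv⟩ + sgn (e : Finset V) {w} * f ⟨{w}, hw⟩ = _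
  rw [hsv, hsw]
  ring

lemma jmap_ker {L : Finset (Finset V)} (hL : IsCplx L) (g : ↥(LCset L)) :
    cob L 0 (jmap L g) = 0 := by
  funext e
  have heL : (e : Finset V) ∈ L := (mem_pfaces.1 e.2).1
  obtain ⟨x, y, hxy, hpair⟩ := Finset.card_eq_two.1 (mem_pfaces.1 e.2).2
  obtain ⟨v, w, hvw, hpair⟩ : ∃ v w, v < w ∧ (e : Finset V) = {v, w} := by
    rcases lt_or_gt_of_ne hxy with h | h
    · exact ⟨x, y, h, hpair⟩
    · exact ⟨y, x, h, by rw [hpair, Finset.pair_comm]⟩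
  have hvm : v ∈ (e : Finset V) := by rw [hpair]; simp
  have hwm : w ∈ (e : Finset V) := by rw [hpair]; simp
  have hv : ({v} : Finset V) ∈ pfaces L 0 :=
    subset_mem_pfaces hL heL (Finset.singleton_subset_iff.2 hvm) (Finset.card_singleton v)
  have hw : ({w} : Finset V) ∈ pfaces L 0 :=
    subset_mem_pfaces hL heL (Finset.singleton_subset_iff.2 hwm) (Finset.card_singleton w)
  rw [cob_edge (jmap L g) e hvw hpair hv hw, jmap_singleton L g _ rfl,
    jmap_singleton L g _ rfl, Pi.zero_apply, g.2.2 (e : Finset V) heL w hwm v hvm, sub_self]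

lemma jmap_surj_ker {L : Finset (Finset V)} (hL : IsCplx L) (f : ChnQ L 0)
    (hf : cob L 0 f = 0) : ∃ g : ↥(LCset L), jmap L g = f := by
  have key : ∀ (v w : V), v < w → ({v, w} : Finset V) ∈ L →
      ∀ (hv : ({v} : Finset V) ∈ pfaces L 0) (hw : ({w} : Finset V) ∈ pfaces L 0),
      f ⟨{v}, hv⟩ = f ⟨{w}, hw⟩ := by
    intro v w hvw hvwL hv hw
    have he : ({v, w} : Finset V) ∈ pfaces L 1 :=
      mem_pfaces.2 ⟨hvwL, Finset.card_pair (ne_of_lt hvw)⟩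
    have := congrFun hf ⟨{v, w}, he⟩
    rw [cob_edge f ⟨{v, w}, he⟩ hvw rfl hv hw, Pi.zero_apply, sub_eq_zero] at this
    exact this.symm
  have hgm : (fun v => if h : ({v} : Finset V) ∈ pfaces L 0 then f ⟨{v}, h⟩ else 0) ∈ LCset L := by
    constructor
    · intro v hv
      beta_reduce
      rw [dif_neg]
      intro hc
      exact hv (mem_verts.2 ⟨{v}, (mem_pfaces.1 hc).1, Finset.mem_singleton_self v⟩)
    · intro t ht v hv w hw
      have hsing : ∀ x ∈ t, ({x} : Finset V) ∈ pfaces L 0 := fun x hx =>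
        subset_mem_pfaces hL ht (Finset.singleton_subset_iff.2 hx) (Finset.card_singleton x)
      have hpairm : ∀ x ∈ t, ∀ y ∈ t, x ≠ y → ({x, y} : Finset V) ∈ L := fun x hx y hy hne =>
        hL.2 t ht {x, y} (Finset.insert_subset hx (Finset.singleton_subset_iff.2 hy))
          ⟨x, by simp⟩
      beta_reduce
      rw [dif_pos (hsing v hv), dif_pos (hsing w hw)]
      rcases lt_trichotomy v w with h | h | h
      · exact key v w h (hpairm v hv w hw (ne_of_lt h)) _ _
      · subst h; rfl
      · exact (key w v h (by rw [Finset.pair_comm]; exact hpairm v hv w hw (ne_of_gt h)) _ _).symm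
  refine ⟨⟨_, hgm⟩, ?_⟩
  funext t
  obtain ⟨x, hx⟩ := Finset.card_eq_one.1 (mem_pfaces.1 t.2).2
  have hxm : ({x} : Finset V) ∈ pfaces L 0 := by rw [← hx]; exact t.2
  rw [jmap_singleton L _ t hx]
  show (if h : ({x} : Finset V) ∈ pfaces L 0 then f ⟨{x}, h⟩ else 0) = f t
  rw [dif_pos hxm]
  congr 1
  exact Subtype.ext hx.symm

lemma jmap_range {L : Finset (Finset V)} (hL : IsCplx L) :
    LinearMap.range (jmap L) = LinearMap.ker (cob L 0) := by
  apply le_antisymm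
  · rintro f ⟨g, rfl⟩
    exact jmap_ker hL g
  · intro f hf
    obtain ⟨g, hg⟩ := jmap_surj_ker hL f hf
    exact ⟨g, hg⟩

lemma jmap_rst {L L' : Finset (Finset V)} (h : L' ⊆ L) (g : ↥(LCset L)) :
    resC h 0 (jmap L g) = jmap L' (rst L L' h g) := by
  funext t
  rw [resC_apply, jmap_apply, jmap_apply]
  refine Finset.sum_congr rfl fun v hv => ?_
  have : v ∈ verts L' := mem_verts.2 ⟨(t : Finset V), (mem_pfaces.1 t.2).1, hv⟩
  show (g : V → ℚ) v = _
  simp only [rst, LinearMap.coe_mk, AddHom.coe_mk]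
  rw [if_pos this]

end Aux

section ChaseSec
set_option linter.unusedSectionVars false
open Module LinearMap

variable {X0 X1 X2 Y0 Y1 Y2 Z0 Z1 W0 : Type*}
  [AddCommGroup X0] [Module ℚ X0] [AddCommGroup X1] [Module ℚ X1]
  [AddCommGroup X2] [Module ℚ X2] [AddCommGroup Y0] [Module ℚ Y0]
  [AddCommGroup Y1] [Module ℚ Y1] [AddCommGroup Y2] [Module ℚ Y2]
  [AddCommGroup Z0] [Module ℚ Z0] [AddCommGroup Z1] [Module ℚ Z1]
  [AddCommGroup W0] [Module ℚ W0]
  [FiniteDimensional ℚ X0] [FiniteDimensional ℚ X1] [FiniteDimensional ℚ Y0]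
  [FiniteDimensional ℚ Z0]

theorem chase
    (dX0 : X0 →ₗ[ℚ] X1) (dX1 : X1 →ₗ[ℚ] X2)
    (dY0 : Y0 →ₗ[ℚ] Y1) (dY1 : Y1 →ₗ[ℚ] Y2) (dZ0 : Z0 →ₗ[ℚ] Z1)
    (r0 : X0 →ₗ[ℚ] Y0) (r1 : X1 →ₗ[ℚ] Y1) (r2 : X2 →ₗ[ℚ] Y2)
    (a0 : Y0 →ₗ[ℚ] Z0) (a1 : Y1 →ₗ[ℚ] Z1) (b0 : Z0 →ₗ[ℚ] W0)
    (hr0 : Function.Injective r0) (hr1 : Function.Injective r1)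
    (hr2 : Function.Injective r2)
    (sq0 : ∀ x, dY0 (r0 x) = r1 (dX0 x)) (sq1 : ∀ x, dY1 (r1 x) = r2 (dX1 x))
    (sqa : ∀ y, dZ0 (a0 y) = a1 (dY0 y))
    (ka0 : LinearMap.ker a0 = LinearMap.range r0)
    (ka1 : LinearMap.ker a1 = LinearMap.range r1)
    (kb0 : LinearMap.ker b0 = LinearMap.range a0)
    (ddY : ∀ y, dY1 (dY0 y) = 0)
    (hH1 : LinearMap.ker dY1 ≤ LinearMap.range dY0) :
    finrank ℚ (LinearMap.ker dX0) = finrank ℚ ↥(LinearMap.ker dY0 ⊓ LinearMap.ker a0) ∧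
    (finrank ℚ (LinearMap.ker dX1) : ℤ) - finrank ℚ (LinearMap.range dX0)
      = (finrank ℚ ↥(LinearMap.ker b0 ⊓ LinearMap.ker dZ0) : ℤ)
        - finrank ℚ ↥(Submodule.map a0 (LinearMap.ker dY0)) := by
  -- part 1
  have part1 : finrank ℚ (LinearMap.ker dX0)
      = finrank ℚ ↥(LinearMap.ker dY0 ⊓ LinearMap.ker a0) := by
    have hland : ∀ g : ↥(LinearMap.ker dX0),
        r0 g.1 ∈ LinearMap.ker dY0 ⊓ LinearMap.ker a0 := by
      intro g
      refine Submodule.mem_inf.2 ⟨?_, ?_⟩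
      · rw [LinearMap.mem_ker, sq0, g.2, map_zero]
      · rw [ka0]; exact ⟨g.1, rfl⟩
    let τ : ↥(LinearMap.ker dX0) →ₗ[ℚ] ↥(LinearMap.ker dY0 ⊓ LinearMap.ker a0) :=
      LinearMap.codRestrict _ (r0.comp (LinearMap.ker dX0).subtype) hland
    have hbij : Function.Bijective τ := by
      constructor
      · intro g g' hgg
        apply Subtype.ext
        apply hr0
        exact congrArg Subtype.val hgg
      · rintro ⟨y, hy⟩
        rw [Submodule.mem_inf] at hy
        obtain ⟨g, rfl⟩ := ka0 ▸ hy.2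
        have hg : g ∈ LinearMap.ker dX0 := by
          rw [LinearMap.mem_ker]
          apply hr1
          rw [← sq0, hy.1.out, map_zero]
        exact ⟨⟨g, hg⟩, rfl⟩
    exact (LinearEquiv.ofBijective τ hbij).finrank_eq
  refine ⟨part1, ?_⟩
  -- the big middle module
  set M : Submodule ℚ (Y0 × X1) :=
    LinearMap.ker (((dY0.comp (LinearMap.fst ℚ Y0 X1))
      - (r1.comp (LinearMap.snd ℚ Y0 X1))).prod (dX1.comp (LinearMap.snd ℚ Y0 X1))) with hM
  have memM : ∀ p : Y0 × X1, p ∈ M ↔ dY0 p.1 = r1 p.2 ∧ dX1 p.2 = 0 := by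
    intro p
    rw [hM, LinearMap.mem_ker, LinearMap.prod_apply]
    simp only [Function.prod, LinearMap.sub_apply, LinearMap.comp_apply, LinearMap.fst_apply,
      LinearMap.snd_apply, Prod.mk_eq_zero, sub_eq_zero]
  set π : ↥M →ₗ[ℚ] Z0 := a0.comp ((LinearMap.fst ℚ Y0 X1).comp M.subtype) with hπ
  set ρ : ↥M →ₗ[ℚ] X1 := (LinearMap.snd ℚ Y0 X1).comp M.subtype with hρ
  have hrangeπ : LinearMap.range π = LinearMap.ker b0 ⊓ LinearMap.ker dZ0 := by
    apply le_antisymm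
    · rintro z ⟨m, rfl⟩
      obtain ⟨h1, h2⟩ := (memM m.1).1 m.2
      refine Submodule.mem_inf.2 ⟨?_, ?_⟩
      · rw [kb0]; exact ⟨m.1.1, rfl⟩
      · rw [LinearMap.mem_ker]
        show dZ0 (a0 m.1.1) = 0
        rw [sqa, h1]
        have : r1 m.1.2 ∈ LinearMap.ker a1 := by rw [ka1]; exact ⟨m.1.2, rfl⟩
        exact this
    · rintro z hz
      rw [Submodule.mem_inf] at hz
      obtain ⟨f, rfl⟩ := kb0 ▸ hz.1
      have h2 : a1 (dY0 f) = 0 := by rw [← sqa]; exact hz.2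
      obtain ⟨c, hc⟩ : dY0 f ∈ LinearMap.range r1 := ka1 ▸ h2
      have hdc : dX1 c = 0 := by
        apply hr2
        rw [← sq1, hc, ddY, map_zero]
      exact ⟨⟨(f, c), (memM (f, c)).2 ⟨hc.symm, hdc⟩⟩, rfl⟩
  have hkerπ : finrank ℚ (LinearMap.ker π) = finrank ℚ X0 := by
    have hMmem : ∀ g : X0, (r0 g, dX0 g) ∈ M := by
      intro g
      refine (memM _).2 ⟨sq0 g, ?_⟩
      apply hr2
      rw [← sq1, ← sq0, ddY, map_zero]
    have hkmem : ∀ g : X0, (⟨(r0 g, dX0 g), hMmem g⟩ : ↥M) ∈ LinearMap.ker π := by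
      intro g
      rw [LinearMap.mem_ker]
      show a0 (r0 g) = 0
      have : r0 g ∈ LinearMap.ker a0 := by rw [ka0]; exact ⟨g, rfl⟩
      exact this
    let τ : X0 →ₗ[ℚ] ↥(LinearMap.ker π) :=
      LinearMap.codRestrict _ (LinearMap.codRestrict M (r0.prod dX0) hMmem) hkmem
    have hbij : Function.Bijective τ := by
      constructor
      · intro g g' hgg
        apply hr0
        have := congrArg (fun m : ↥(LinearMap.ker π) => m.1.1.1) hgg
        exact this
      · rintro ⟨⟨⟨f, c⟩, hm⟩, hk⟩
        obtain ⟨h1, h2⟩ := (memM _).1 hm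
        have hf : a0 f = 0 := hk
        obtain ⟨g, rfl⟩ : f ∈ LinearMap.range r0 := ka0 ▸ hf
        have hc : c = dX0 g := by
          apply hr1
          rw [← h1, sq0]
        refine ⟨g, ?_⟩
        apply Subtype.ext
        apply Subtype.ext
        simp only [τ, LinearMap.codRestrict_apply, LinearMap.prod_apply, Pi.prod]
        exact Prod.ext rfl hc.symm
    exact (LinearEquiv.ofBijective τ hbij).finrank_eq.symm
  have hrangeρ : LinearMap.range ρ = LinearMap.ker dX1 := by
    apply le_antisymm
    · rintro c ⟨m, rfl⟩
      exact ((memM m.1).1 m.2).2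
    · intro c hc
      have : r1 c ∈ LinearMap.ker dY1 := by
        rw [LinearMap.mem_ker, sq1, hc.out, map_zero]
      obtain ⟨f, hf⟩ := hH1 this
      exact ⟨⟨(f, c), (memM (f, c)).2 ⟨hf, hc⟩⟩, rfl⟩
  have hkerρ : finrank ℚ (LinearMap.ker ρ) = finrank ℚ (LinearMap.ker dY0) := by
    have hMmem : ∀ f : ↥(LinearMap.ker dY0), ((f : Y0), (0 : X1)) ∈ M := by
      intro f
      refine (memM _).2 ⟨?_, by rw [map_zero]⟩
      rw [f.2.out, map_zero]
    have hkmem : ∀ f : ↥(LinearMap.ker dY0),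
        (⟨((f : Y0), 0), hMmem f⟩ : ↥M) ∈ LinearMap.ker ρ := fun f => rfl
    let κ : ↥(LinearMap.ker dY0) →ₗ[ℚ] ↥(LinearMap.ker ρ) :=
      { toFun := fun f => ⟨⟨((f : Y0), 0), hMmem f⟩, hkmem f⟩
        map_add' := fun f g => by
          apply Subtype.ext; apply Subtype.ext
          exact Prod.ext rfl (by simp)
        map_smul' := fun a f => by
          apply Subtype.ext; apply Subtype.ext
          exact Prod.ext rfl (by simp) }
    have hbij : Function.Bijective κ := by
      constructor
      · intro f g hfg
        apply Subtype.ext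
        exact congrArg (fun m : ↥(LinearMap.ker ρ) => m.1.1.1) hfg
      · rintro ⟨⟨⟨f, c⟩, hm⟩, hk⟩
        have hc : c = 0 := hk
        subst hc
        have hf : dY0 f = 0 := by
          obtain ⟨h1, _⟩ := (memM _).1 hm
          rw [h1, map_zero]
        exact ⟨⟨f, hf⟩, rfl⟩
    exact (LinearEquiv.ofBijective κ hbij).finrank_eq.symm
  -- rank-nullity pieces
  have rnπ := LinearMap.finrank_range_add_finrank_ker π
  have rnρ := LinearMap.finrank_range_add_finrank_ker ρ
  have rnX0 := LinearMap.finrank_range_add_finrank_ker dX0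
  -- the a0 restricted to ker dY0
  have e5 : finrank ℚ ↥(Submodule.map a0 (LinearMap.ker dY0))
      + finrank ℚ ↥(LinearMap.ker dY0 ⊓ LinearMap.ker a0)
      = finrank ℚ ↥(LinearMap.ker dY0) := by
    have rnφ := LinearMap.finrank_range_add_finrank_ker (a0.domRestrict (LinearMap.ker dY0))
    rw [LinearMap.range_domRestrict] at rnφ
    have hkφ : finrank ℚ ↥(LinearMap.ker (a0.domRestrict (LinearMap.ker dY0)))
        = finrank ℚ ↥(LinearMap.ker dY0 ⊓ LinearMap.ker a0) := by
      have hker : LinearMap.ker (a0.domRestrict (LinearMap.ker dY0))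
          = Submodule.comap (LinearMap.ker dY0).subtype (LinearMap.ker a0) := by
        ext x
        simp [LinearMap.mem_ker, LinearMap.domRestrict_apply]
      rw [hker]
      rw [← Submodule.map_comap_subtype (LinearMap.ker dY0) (LinearMap.ker a0)]
      exact (Submodule.equivMapOfInjective _ (Submodule.injective_subtype _) _).finrank_eq
    rw [hkφ] at rnφ
    exact rnφ
  rw [hrangeπ] at rnπ
  rw [hrangeρ] at rnρ
  rw [hkerπ] at rnπ
  rw [hkerρ] at rnρ
  rw [part1] at rnX0
  omega

end ChaseSec

section Cech
open Module

variable {n : ℕ}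

/-- The union complex. -/
def KK (A : Fin n → Finset (Finset V)) : Finset (Finset V) := Finset.univ.biUnion A

lemma subK (A : Fin n → Finset (Finset V)) (i : Fin n) : A i ⊆ KK A := fun s hs =>
  Finset.mem_biUnion.2 ⟨i, Finset.mem_univ i, hs⟩

lemma exists_idx {A : Fin n → Finset (Finset V)} {q : ℕ} {t : Finset V}
    (ht : t ∈ pfaces (KK A) q) : ∃ i, t ∈ pfaces (A i) q := by
  rw [mem_pfaces] at ht
  obtain ⟨i, _, hi⟩ := Finset.mem_biUnion.1 ht.1
  exact ⟨i, mem_pfaces.2 ⟨hi, ht.2⟩⟩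

lemma pf_inter_left {Ka Kb : Finset (Finset V)} {q : ℕ} {t : Finset V}
    (h : t ∈ pfaces (Ka ∩ Kb) q) : t ∈ pfaces Ka q := pfaces_mono Finset.inter_subset_left q h

lemma mem_pfaces_inter {Ka Kb : Finset (Finset V)} {q : ℕ} {t : Finset V} :
    t ∈ pfaces (Ka ∩ Kb) q ↔ t ∈ pfaces Ka q ∧ t ∈ pfaces Kb q := by
  simp only [mem_pfaces, Finset.mem_inter]
  tauto

variable (A : Fin n → Finset (Finset V))

noncomputable def rmap (q : ℕ) : ChnQ (KK A) q →ₗ[ℚ] ∀ i, ChnQ (A i) q :=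
  LinearMap.pi fun i => resC (subK A i) q

noncomputable def dYmap (q : ℕ) : (∀ i, ChnQ (A i) q) →ₗ[ℚ] ∀ i, ChnQ (A i) (q + 1) :=
  LinearMap.pi fun i => (cob (A i) q).comp (LinearMap.proj i)

noncomputable def amap (q : ℕ) : (∀ i, ChnQ (A i) q) →ₗ[ℚ]
    ∀ p : {p : Fin n × Fin n // p.1 < p.2}, ChnQ (A p.1.1 ∩ A p.1.2) q :=
  LinearMap.pi fun p => (resC Finset.inter_subset_left q).comp (LinearMap.proj p.1.1)
    - (resC Finset.inter_subset_right q).comp (LinearMap.proj p.1.2)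

noncomputable def dZmap (q : ℕ) :
    (∀ p : {p : Fin n × Fin n // p.1 < p.2}, ChnQ (A p.1.1 ∩ A p.1.2) q) →ₗ[ℚ]
    ∀ p : {p : Fin n × Fin n // p.1 < p.2}, ChnQ (A p.1.1 ∩ A p.1.2) (q + 1) :=
  LinearMap.pi fun p => (cob (A p.1.1 ∩ A p.1.2) q).comp (LinearMap.proj p)

lemma tri_sub_left {i j l : Fin n} : A i ∩ A j ∩ A l ⊆ A i ∩ A j :=
  Finset.inter_subset_left

lemma tri_sub_mid {i j l : Fin n} : A i ∩ A j ∩ A l ⊆ A i ∩ A l := by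
  intro x hx; simp only [Finset.mem_inter] at hx ⊢; exact ⟨hx.1.1, hx.2⟩

lemma tri_sub_right {i j l : Fin n} : A i ∩ A j ∩ A l ⊆ A j ∩ A l := by
  intro x hx; simp only [Finset.mem_inter] at hx ⊢; exact ⟨hx.1.2, hx.2⟩

noncomputable def bmap :
    (∀ p : {p : Fin n × Fin n // p.1 < p.2}, ChnQ (A p.1.1 ∩ A p.1.2) 0) →ₗ[ℚ]
    ∀ t : {t : Fin n × Fin n × Fin n // t.1 < t.2.1 ∧ t.2.1 < t.2.2},
      ChnQ (A t.1.1 ∩ A t.1.2.1 ∩ A t.1.2.2) 0 :=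
  LinearMap.pi fun t =>
    (resC (tri_sub_left A) 0).comp (LinearMap.proj (⟨(t.1.1, t.1.2.1), t.2.1⟩ : {p : Fin n × Fin n // p.1 < p.2}))
    - (resC (tri_sub_mid A) 0).comp (LinearMap.proj (⟨(t.1.1, t.1.2.2), lt_trans t.2.1 t.2.2⟩ : {p : Fin n × Fin n // p.1 < p.2}))
    + (resC (tri_sub_right A) 0).comp (LinearMap.proj (⟨(t.1.2.1, t.1.2.2), t.2.2⟩ : {p : Fin n × Fin n // p.1 < p.2}))

lemma rmap_inj (q : ℕ) : Function.Injective (rmap A q) := by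
  intro c c' hcc
  funext t
  obtain ⟨i, hi⟩ := exists_idx t.2
  have := congrFun (congrFun hcc i) ⟨t.1, hi⟩
  exact this

lemma rmap_sq (hA : ∀ i, IsCplx (A i)) (q : ℕ) (c : ChnQ (KK A) q) :
    dYmap A (q) ((rmap A q) c) = rmap A (q + 1) (cob (KK A) q c) := by
  funext i
  exact cob_resC (hA i) (subK A i) q c

lemma amap_sq (hA : ∀ i, IsCplx (A i)) (q : ℕ) (f : ∀ i, ChnQ (A i) q) :
    dZmap A q (amap A q f) = amap A (q + 1) (dYmap A q f) := by
  funext p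
  show cob (A p.1.1 ∩ A p.1.2) q ((amap A q f) p)
      = resC Finset.inter_subset_left (q + 1) (cob (A p.1.1) q (f p.1.1))
        - resC Finset.inter_subset_right (q + 1) (cob (A p.1.2) q (f p.1.2))
  have he : (amap A q f) p
      = resC Finset.inter_subset_left q (f p.1.1) - resC Finset.inter_subset_right q (f p.1.2) := rfl
  rw [he, map_sub,
    cob_resC (IsCplx.inter (hA p.1.1) (hA p.1.2)) Finset.inter_subset_left q,
    cob_resC (IsCplx.inter (hA p.1.1) (hA p.1.2)) Finset.inter_subset_right q]

lemma pair_compat {q : ℕ} {f : ∀ i, ChnQ (A i) q} (hf : amap A q f = 0)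
    (i j : Fin n) (t : Finset V) (hti : t ∈ pfaces (A i) q) (htj : t ∈ pfaces (A j) q) :
    f i ⟨t, hti⟩ = f j ⟨t, htj⟩ := by
  rcases lt_trichotomy i j with h | h | h
  · have := congrFun (congrFun hf ⟨(i, j), h⟩) ⟨t, mem_pfaces_inter.2 ⟨hti, htj⟩⟩
    have h2 : f i ⟨t, hti⟩ - f j ⟨t, htj⟩ = 0 := this
    linarith
  · subst h; rfl
  · have := congrFun (congrFun hf ⟨(j, i), h⟩) ⟨t, mem_pfaces_inter.2 ⟨htj, hti⟩⟩
    have h2 : f j ⟨t, htj⟩ - f i ⟨t, hti⟩ = 0 := this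
    linarith

lemma ker_amap (q : ℕ) : LinearMap.ker (amap A q) = LinearMap.range (rmap A q) := by
  apply le_antisymm
  · intro f hf
    have hf0 : amap A q f = 0 := hf
    refine ⟨fun t => f (Classical.choose (exists_idx t.2))
      ⟨t.1, Classical.choose_spec (exists_idx t.2)⟩, ?_⟩
    funext i t
    show f (Classical.choose _) ⟨t.1, _⟩ = f i t
    exact pair_compat A hf0 _ i t.1 _ t.2
  · rintro f ⟨c, rfl⟩
    show amap A q (rmap A q c) = 0
    funext p t
    show c _ - c _ = 0
    rw [sub_eq_zero]

lemma amap_apply0 {n : ℕ} (A : Fin n → Finset (Finset V)) (q : ℕ) (f : ∀ i, ChnQ (A i) q)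
    (p : {p : Fin n × Fin n // p.1 < p.2}) (t : ↥(pfaces (A p.1.1 ∩ A p.1.2) q)) :
    amap A q f p t = f p.1.1 ⟨t.1, pfaces_mono Finset.inter_subset_left q t.2⟩
      - f p.1.2 ⟨t.1, pfaces_mono Finset.inter_subset_right q t.2⟩ := rfl

lemma ker_bmap {n : ℕ} (A : Fin n → Finset (Finset V)) :
    LinearMap.ker (bmap A) = LinearMap.range (amap A 0) := by
  apply le_antisymm
  · intro ψ hψ
    have hψ0 : bmap A ψ = 0 := hψ
    by_cases hn : n = 0
    · refine ⟨0, ?_⟩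
      funext p
      exact absurd p.2 (by subst hn; exact (p.1.1).elim0)
    have hnpos : 0 < n := Nat.pos_of_ne_zero hn
    classical
    set S : Finset V → Finset (Fin n) := fun x => Finset.univ.filter (fun k => x ∈ A k) with hS
    have hSmem : ∀ {x : Finset V} {k : Fin n}, x ∈ A k → k ∈ S x := fun hx =>
      Finset.mem_filter.2 ⟨Finset.mem_univ _, hx⟩
    set mf : Finset V → Fin n := fun x => if h : (S x).Nonempty then (S x).min' h
      else ⟨0, hnpos⟩ with hmf
    have hm1 : ∀ {x : Finset V} {k : Fin n}, x ∈ A k → x ∈ A (mf x) := by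
      intro x k hx
      have hne : (S x).Nonempty := ⟨k, hSmem hx⟩
      have : mf x = (S x).min' hne := by rw [hmf]; exact dif_pos hne
      rw [this]
      exact (Finset.mem_filter.1 ((S x).min'_mem hne)).2
    have hm2 : ∀ {x : Finset V} {k : Fin n}, x ∈ A k → mf x ≤ k := by
      intro x k hx
      have hne : (S x).Nonempty := ⟨k, hSmem hx⟩
      have : mf x = (S x).min' hne := by rw [hmf]; exact dif_pos hne
      rw [this]
      exact Finset.min'_le _ _ (hSmem hx)
    set f : ∀ i, ChnQ (A i) 0 := fun k t =>
      if h : mf t.1 < k then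
        - ψ ⟨(mf t.1, k), h⟩ ⟨t.1, mem_pfaces.2 ⟨Finset.mem_inter.2
            ⟨hm1 (mem_pfaces.1 t.2).1, (mem_pfaces.1 t.2).1⟩, (mem_pfaces.1 t.2).2⟩⟩
      else 0 with hf
    have hfeval : ∀ (k : Fin n) (t : ↥(pfaces (A k) 0)) (h : mf t.1 < k)
        (pf : t.1 ∈ pfaces (A (mf t.1) ∩ A k) 0),
        f k t = - ψ ⟨(mf t.1, k), h⟩ ⟨t.1, pf⟩ := by
      intro k t h pf
      show dite _ _ _ = _
      rw [dif_pos h]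
    have hfeval0 : ∀ (k : Fin n) (t : ↥(pfaces (A k) 0)), ¬ mf t.1 < k → f k t = 0 := by
      intro k t h
      show dite _ _ _ = _
      rw [dif_neg h]
    refine ⟨f, ?_⟩
    funext p
    obtain ⟨⟨i, j⟩, hij⟩ := p
    funext t
    have hxi : t.1 ∈ pfaces (A i) 0 := (mem_pfaces_inter.1 t.2).1
    have hxj : t.1 ∈ pfaces (A j) 0 := (mem_pfaces_inter.1 t.2).2
    have hxiA : t.1 ∈ A i := (mem_pfaces.1 hxi).1
    have hxjA : t.1 ∈ A j := (mem_pfaces.1 hxj).1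
    have hcard : t.1.card = 0 + 1 := (mem_pfaces.1 hxi).2
    rw [amap_apply0]
    have hmi : mf t.1 ≤ i := hm2 hxiA
    have hmA : t.1 ∈ A (mf t.1) := hm1 hxiA
    have hmj : mf t.1 < j := lt_of_le_of_lt hmi hij
    have pfj : t.1 ∈ pfaces (A (mf t.1) ∩ A j) 0 :=
      mem_pfaces.2 ⟨Finset.mem_inter.2 ⟨hmA, hxjA⟩, hcard⟩
    have hcast : ∀ (p p' : {p : Fin n × Fin n // p.1 < p.2}) (hpp : p = p') (x : Finset V)
        (hx : x ∈ pfaces (A p.1.1 ∩ A p.1.2) 0) (hx' : x ∈ pfaces (A p'.1.1 ∩ A p'.1.2) 0),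
        ψ p ⟨x, hx⟩ = ψ p' ⟨x, hx'⟩ := by
      rintro p p' rfl x hx hx'
      rfl
    rcases eq_or_lt_of_le hmi with heq | hlt
    · -- mf t.1 = i
      rw [hfeval0 i ⟨t.1, pfaces_mono Finset.inter_subset_left 0 t.2⟩
          (by rw [heq]; exact lt_irrefl i),
        hfeval j ⟨t.1, pfaces_mono Finset.inter_subset_right 0 t.2⟩ hmj pfj]
      show 0 - - ψ ⟨(mf t.1, j), hmj⟩ ⟨t.1, pfj⟩ = ψ ⟨(i, j), hij⟩ t
      rw [zero_sub, neg_neg]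
      exact hcast _ _ (Subtype.ext (by show (mf t.1, j) = (i, j); rw [heq])) t.1 pfj t.2
    · -- mf t.1 < i
      have pfi : t.1 ∈ pfaces (A (mf t.1) ∩ A i) 0 :=
        mem_pfaces.2 ⟨Finset.mem_inter.2 ⟨hmA, hxiA⟩, hcard⟩
      rw [hfeval i ⟨t.1, pfaces_mono Finset.inter_subset_left 0 t.2⟩ hlt pfi,
        hfeval j ⟨t.1, pfaces_mono Finset.inter_subset_right 0 t.2⟩ hmj pfj]
      have pfτ : t.1 ∈ pfaces (A (mf t.1) ∩ A i ∩ A j) 0 :=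
        mem_pfaces.2 ⟨Finset.mem_inter.2 ⟨Finset.mem_inter.2 ⟨hmA, hxiA⟩, hxjA⟩, hcard⟩
      have h3 : ψ ⟨(mf t.1, i), hlt⟩ ⟨t.1, pfi⟩ - ψ ⟨(mf t.1, j), hmj⟩ ⟨t.1, pfj⟩
          + ψ ⟨(i, j), hij⟩ ⟨t.1, t.2⟩ = 0 :=
        congrFun (congrFun hψ0 ⟨(mf t.1, i, j), ⟨hlt, hij⟩⟩) ⟨t.1, pfτ⟩
      have h4 : ψ ⟨(i, j), hij⟩ ⟨t.1, t.2⟩ = ψ ⟨(i, j), hij⟩ t := rfl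
      rw [h4] at h3
      linarith
  · rintro ψ ⟨g, rfl⟩
    show bmap A (amap A 0 g) = 0
    funext τ t
    have pA : t.1 ∈ pfaces (A τ.1.1) 0 :=
      pfaces_mono Finset.inter_subset_left 0 (pfaces_mono (tri_sub_left A) 0 t.2)
    have pB : t.1 ∈ pfaces (A τ.1.2.1) 0 :=
      pfaces_mono Finset.inter_subset_right 0 (pfaces_mono (tri_sub_left A) 0 t.2)
    have pC : t.1 ∈ pfaces (A τ.1.2.2) 0 :=
      pfaces_mono Finset.inter_subset_right 0 (pfaces_mono (tri_sub_mid A) 0 t.2)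
    show g τ.1.1 ⟨t.1, pA⟩ - g τ.1.2.1 ⟨t.1, pB⟩ - (g τ.1.1 ⟨t.1, pA⟩ - g τ.1.2.2 ⟨t.1, pC⟩)
      + (g τ.1.2.1 ⟨t.1, pB⟩ - g τ.1.2.2 ⟨t.1, pC⟩) = 0
    ring

lemma H1_eq {L : Finset (Finset V)} (hL : IsCplx L)
    (h : Module.finrank ℚ ↥(LinearMap.ker (bdryQ L 0))
       = Module.finrank ℚ ↥(LinearMap.range (bdryQ L 1))) :
    LinearMap.ker (cob L 1) = LinearMap.range (cob L 0) := by
  have h1 := LinearMap.finrank_range_add_finrank_ker (bdryQ L 0)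
  have h2 := LinearMap.finrank_range_add_finrank_ker (cob L 1)
  have r0 := rank_cob_eq L 0
  have r1 := rank_cob_eq L 1
  have hle : LinearMap.range (cob L 0) ≤ LinearMap.ker (cob L 1) := by
    rintro x ⟨y, rfl⟩
    rw [LinearMap.mem_ker]
    exact cob_cob hL 0 y
  refine (Submodule.eq_of_le_of_finrank_le hle ?_).symm
  have hd : Module.finrank ℚ (ChnQ L (0 + 1)) = Module.finrank ℚ (ChnQ L 1) := rfl
  linarith

variable {n : ℕ}

lemma ddY (A : Fin n → Finset (Finset V)) (hA : ∀ i, IsCplx (A i))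
    (y : ∀ i, ChnQ (A i) 0) : dYmap A 1 (dYmap A 0 y) = 0 :=
  funext fun i => cob_cob (hA i) 0 (y i)

lemma hH1Y (A : Fin n → Finset (Finset V)) (hA : ∀ i, IsCplx (A i))
    (hH1 : ∀ i, Module.finrank ℚ ↥(LinearMap.ker (bdryQ (A i) 0)) =
      Module.finrank ℚ ↥(LinearMap.range (bdryQ (A i) 1))) :
    LinearMap.ker (dYmap A 1) ≤ LinearMap.range (dYmap A 0) := by
  intro h hk
  have hk0 : dYmap A 1 h = 0 := hk
  have hper : ∀ i, h i ∈ LinearMap.range (cob (A i) 0) := by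
    intro i
    rw [← H1_eq (hA i) (hH1 i), LinearMap.mem_ker]
    exact congrFun hk0 i
  refine ⟨fun i => Classical.choose (hper i), funext fun i => ?_⟩
  exact Classical.choose_spec (hper i)

/-- Pi-level comparison maps. -/
noncomputable def Jy (A : Fin n → Finset (Finset V)) :
    (∀ i, ↥(LCset (A i))) →ₗ[ℚ] ∀ i, ChnQ (A i) 0 :=
  LinearMap.pi fun i => (jmap (A i)).comp (LinearMap.proj i)

noncomputable def Jz (A : Fin n → Finset (Finset V)) :
    (∀ p : {p : Fin n × Fin n // p.1 < p.2}, ↥(LCset (A p.1.1 ∩ A p.1.2))) →ₗ[ℚ]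
    ∀ p : {p : Fin n × Fin n // p.1 < p.2}, ChnQ (A p.1.1 ∩ A p.1.2) 0 :=
  LinearMap.pi fun p => (jmap (A p.1.1 ∩ A p.1.2)).comp (LinearMap.proj p)

noncomputable def Jw (A : Fin n → Finset (Finset V)) :
    (∀ t : {t : Fin n × Fin n × Fin n // t.1 < t.2.1 ∧ t.2.1 < t.2.2},
      ↥(LCset (A t.1.1 ∩ A t.1.2.1 ∩ A t.1.2.2))) →ₗ[ℚ]
    ∀ t : {t : Fin n × Fin n × Fin n // t.1 < t.2.1 ∧ t.2.1 < t.2.2},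
      ChnQ (A t.1.1 ∩ A t.1.2.1 ∩ A t.1.2.2) 0 :=
  LinearMap.pi fun t => (jmap (A t.1.1 ∩ A t.1.2.1 ∩ A t.1.2.2)).comp (LinearMap.proj t)

lemma Jy_inj (A : Fin n → Finset (Finset V)) (hA : ∀ i, IsCplx (A i)) :
    Function.Injective (Jy A) := by
  intro φ φ' hφ
  funext i
  exact jmap_inj (hA i) (congrFun hφ i)

lemma Jz_inj (A : Fin n → Finset (Finset V)) (hA : ∀ i, IsCplx (A i)) :
    Function.Injective (Jz A) := by
  intro φ φ' hφ
  funext p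
  exact jmap_inj (IsCplx.inter (hA p.1.1) (hA p.1.2)) (congrFun hφ p)

lemma Jw_inj (A : Fin n → Finset (Finset V)) (hA : ∀ i, IsCplx (A i)) :
    Function.Injective (Jw A) := by
  intro φ φ' hφ
  funext t
  exact jmap_inj (IsCplx.inter (IsCplx.inter (hA t.1.1) (hA t.1.2.1)) (hA t.1.2.2))
    (congrFun hφ t)

lemma bridge_a (A : Fin n → Finset (Finset V)) (φ : ∀ i, ↥(LCset (A i))) :
    amap A 0 (Jy A φ) = Jz A (delta0 A φ) := by
  funext p
  show resC Finset.inter_subset_left 0 (jmap (A p.1.1) (φ p.1.1))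
      - resC Finset.inter_subset_right 0 (jmap (A p.1.2) (φ p.1.2))
    = jmap (A p.1.1 ∩ A p.1.2) (delta0 A φ p)
  rw [jmap_rst, jmap_rst, ← map_sub]
  rfl

lemma bridge_b (A : Fin n → Finset (Finset V))
    (ψ : ∀ p : {p : Fin n × Fin n // p.1 < p.2}, ↥(LCset (A p.1.1 ∩ A p.1.2))) :
    bmap A (Jz A ψ) = Jw A (delta1 A ψ) := by
  funext t
  show resC (tri_sub_left A) 0 (jmap _ (ψ ⟨(t.1.1, t.1.2.1), t.2.1⟩))
      - resC (tri_sub_mid A) 0 (jmap _ (ψ ⟨(t.1.1, t.1.2.2), lt_trans t.2.1 t.2.2⟩))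
      + resC (tri_sub_right A) 0 (jmap _ (ψ ⟨(t.1.2.1, t.1.2.2), t.2.2⟩))
    = jmap _ (delta1 A ψ t)
  rw [jmap_rst, jmap_rst, jmap_rst, ← map_sub, ← map_add]
  rfl

lemma range_Jy (A : Fin n → Finset (Finset V)) (hA : ∀ i, IsCplx (A i)) :
    LinearMap.range (Jy A) = LinearMap.ker (dYmap A 0) := by
  apply le_antisymm
  · rintro h ⟨φ, rfl⟩
    show dYmap A 0 (Jy A φ) = 0
    funext i
    exact jmap_ker (hA i) (φ i)
  · intro h hk
    have hper : ∀ i, ∃ g : ↥(LCset (A i)), jmap (A i) g = h i := by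
      intro i
      apply jmap_surj_ker (hA i)
      exact congrFun (show dYmap A 0 h = 0 from hk) i
    exact ⟨fun i => Classical.choose (hper i), funext fun i => Classical.choose_spec (hper i)⟩

lemma range_Jz_inter (A : Fin n → Finset (Finset V)) (hA : ∀ i, IsCplx (A i)) :
    LinearMap.range (Jz A) = LinearMap.ker (dZmap A 0) := by
  apply le_antisymm
  · rintro h ⟨ψ, rfl⟩
    show dZmap A 0 (Jz A ψ) = 0
    funext p
    exact jmap_ker (IsCplx.inter (hA p.1.1) (hA p.1.2)) (ψ p)
  · intro h hk
    have hper : ∀ p : {p : Fin n × Fin n // p.1 < p.2},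
        ∃ g : ↥(LCset (A p.1.1 ∩ A p.1.2)), jmap _ g = h p := by
      intro p
      apply jmap_surj_ker (IsCplx.inter (hA p.1.1) (hA p.1.2))
      exact congrFun (show dZmap A 0 h = 0 from hk) p
    exact ⟨fun p => Classical.choose (hper p), funext fun p => Classical.choose_spec (hper p)⟩

lemma map_Jy_ker (A : Fin n → Finset (Finset V)) (hA : ∀ i, IsCplx (A i)) :
    Submodule.map (Jy A) (LinearMap.ker (delta0 A))
      = LinearMap.ker (dYmap A 0) ⊓ LinearMap.ker (amap A 0) := by
  apply le_antisymm
  · rintro h ⟨φ, hφ, rfl⟩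
    have hφ0 : delta0 A φ = 0 := hφ
    refine Submodule.mem_inf.2 ⟨?_, ?_⟩
    · rw [← range_Jy A hA]; exact ⟨φ, rfl⟩
    · rw [LinearMap.mem_ker, bridge_a, hφ0, map_zero]
  · rintro h hh
    rw [Submodule.mem_inf] at hh
    obtain ⟨φ, rfl⟩ := (range_Jy A hA) ▸ hh.1
    refine ⟨φ, ?_, rfl⟩
    show delta0 A φ = 0
    apply Jz_inj A hA
    rw [← bridge_a, map_zero]
    exact hh.2

lemma map_Jz_ker (A : Fin n → Finset (Finset V)) (hA : ∀ i, IsCplx (A i)) :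
    Submodule.map (Jz A) (LinearMap.ker (delta1 A))
      = LinearMap.ker (bmap A) ⊓ LinearMap.ker (dZmap A 0) := by
  apply le_antisymm
  · rintro h ⟨ψ, hψ, rfl⟩
    have hψ0 : delta1 A ψ = 0 := hψ
    refine Submodule.mem_inf.2 ⟨?_, ?_⟩
    · rw [LinearMap.mem_ker, bridge_b, hψ0, map_zero]
    · rw [← range_Jz_inter A hA]; exact ⟨ψ, rfl⟩
  · rintro h hh
    rw [Submodule.mem_inf] at hh
    obtain ⟨ψ, rfl⟩ := (range_Jz_inter A hA) ▸ hh.2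
    refine ⟨ψ, ?_, rfl⟩
    show delta1 A ψ = 0
    apply Jw_inj A hA
    rw [← bridge_b, map_zero]
    exact hh.1

lemma map_a_kerY (A : Fin n → Finset (Finset V)) (hA : ∀ i, IsCplx (A i)) :
    Submodule.map (amap A 0) (LinearMap.ker (dYmap A 0))
      = Submodule.map (Jz A) (LinearMap.range (delta0 A)) := by
  rw [← range_Jy A hA, ← LinearMap.range_comp, ← LinearMap.range_comp]
  congr 1
  apply LinearMap.ext
  intro φ
  exact bridge_a A φ

end Cech

lemma betti0_eq (K : Finset (Finset V)) :
    bettiQ K 0 = (Module.finrank ℚ ↥(LinearMap.ker (cob K 0)) : ℤ) := by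
  show (Module.finrank ℚ (ChnQ K 0) : ℤ)
      - (Module.finrank ℚ ↥(LinearMap.range (bdryQ K 0)) : ℤ) = _
  have h := LinearMap.finrank_range_add_finrank_ker (cob K 0)
  have r := rank_cob_eq K 0
  have h' : (Module.finrank ℚ ↥(LinearMap.range (cob K 0)) : ℤ)
      + (Module.finrank ℚ ↥(LinearMap.ker (cob K 0)) : ℤ)
      = (Module.finrank ℚ (ChnQ K 0) : ℤ) := by exact_mod_cast h
  have r' : (Module.finrank ℚ ↥(LinearMap.range (cob K 0)) : ℤ)
      = (Module.finrank ℚ ↥(LinearMap.range (bdryQ K 0)) : ℤ) := by exact_mod_cast r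
  linarith

lemma betti1_eq (K : Finset (Finset V)) :
    bettiQ K 1 = (Module.finrank ℚ ↥(LinearMap.ker (cob K 1)) : ℤ)
      - (Module.finrank ℚ ↥(LinearMap.range (cob K 0)) : ℤ) := by
  show (Module.finrank ℚ ↥(LinearMap.ker (bdryQ K 0)) : ℤ)
      - (Module.finrank ℚ ↥(LinearMap.range (bdryQ K 1)) : ℤ) = _
  have h1 := LinearMap.finrank_range_add_finrank_ker (bdryQ K 0)
  have h2 := LinearMap.finrank_range_add_finrank_ker (cob K 1)
  have r0 := rank_cob_eq K 0
  have r1 := rank_cob_eq K 1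
  have hd : Module.finrank ℚ (ChnQ K (0 + 1)) = Module.finrank ℚ (ChnQ K 1) := rfl
  have h1' : (Module.finrank ℚ ↥(LinearMap.range (bdryQ K 0)) : ℤ)
      + (Module.finrank ℚ ↥(LinearMap.ker (bdryQ K 0)) : ℤ)
      = (Module.finrank ℚ (ChnQ K (0 + 1)) : ℤ) := by exact_mod_cast h1
  have h2' : (Module.finrank ℚ ↥(LinearMap.range (cob K 1)) : ℤ)
      + (Module.finrank ℚ ↥(LinearMap.ker (cob K 1)) : ℤ)
      = (Module.finrank ℚ (ChnQ K 1) : ℤ) := by exact_mod_cast h2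
  have r0' : (Module.finrank ℚ ↥(LinearMap.range (cob K 0)) : ℤ)
      = (Module.finrank ℚ ↥(LinearMap.range (bdryQ K 0)) : ℤ) := by exact_mod_cast r0
  have r1' : (Module.finrank ℚ ↥(LinearMap.range (cob K 1)) : ℤ)
      = (Module.finrank ℚ ↥(LinearMap.range (bdryQ K 1)) : ℤ) := by exact_mod_cast r1
  have hd' : (Module.finrank ℚ (ChnQ K (0 + 1)) : ℤ)
      = (Module.finrank ℚ (ChnQ K 1) : ℤ) := by exact_mod_cast hd
  linarith


theorem stmt_18 (n : ℕ) (A : Fin n → Finset (Finset V))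
    (hcplx : ∀ i, IsCplx (A i))
    (hconn : ∀ i, Module.finrank ℚ ↥(LCset (A i)) = 1)
    (hH1 : ∀ i, Module.finrank ℚ ↥(LinearMap.ker (bdryQ (A i) 0)) =
      Module.finrank ℚ ↥(LinearMap.range (bdryQ (A i) 1))) :
    bettiQ (Finset.univ.biUnion A) 0 =
      (Module.finrank ℚ ↥(LinearMap.ker (delta0 A)) : ℤ) ∧
    bettiQ (Finset.univ.biUnion A) 1 =
      (Module.finrank ℚ ↥(LinearMap.ker (delta1 A)) : ℤ) -
        (Module.finrank ℚ ↥(LinearMap.range (delta0 A)) : ℤ) := by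
  obtain ⟨c1, c2⟩ := chase (cob (KK A) 0) (cob (KK A) 1)
    (dYmap A 0) (dYmap A 1) (dZmap A 0)
    (rmap A 0) (rmap A 1) (rmap A 2)
    (amap A 0) (amap A 1) (bmap A)
    (rmap_inj A 0) (rmap_inj A 1) (rmap_inj A 2)
    (rmap_sq A hcplx 0) (rmap_sq A hcplx 1)
    (amap_sq A hcplx 0)
    (ker_amap A 0) (ker_amap A 1) (ker_bmap A)
    (ddY A hcplx) (hH1Y A hcplx hH1)
  have t1 : Module.finrank ℚ ↥(LinearMap.ker (delta0 A))
      = Module.finrank ℚ ↥(LinearMap.ker (dYmap A 0) ⊓ LinearMap.ker (amap A 0)) := by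
    rw [← map_Jy_ker A hcplx]
    exact (Submodule.equivMapOfInjective _ (Jy_inj A hcplx) _).finrank_eq
  have t3 : Module.finrank ℚ ↥(LinearMap.ker (delta1 A))
      = Module.finrank ℚ ↥(LinearMap.ker (bmap A) ⊓ LinearMap.ker (dZmap A 0)) := by
    rw [← map_Jz_ker A hcplx]
    exact (Submodule.equivMapOfInjective _ (Jz_inj A hcplx) _).finrank_eq
  have t4 : Module.finrank ℚ ↥(LinearMap.range (delta0 A))
      = Module.finrank ℚ ↥(Submodule.map (amap A 0) (LinearMap.ker (dYmap A 0))) := by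
    rw [map_a_kerY A hcplx]
    exact (Submodule.equivMapOfInjective _ (Jz_inj A hcplx) _).finrank_eq
  have hKK : Finset.univ.biUnion A = KK A := rfl
  constructor
  · rw [hKK, betti0_eq (KK A)]
    have := c1.trans t1.symm
    exact_mod_cast this
  · rw [hKK, betti1_eq (KK A), c2]
    have t3' : (Module.finrank ℚ ↥(LinearMap.ker (delta1 A)) : ℤ)
        = (Module.finrank ℚ ↥(LinearMap.ker (bmap A) ⊓ LinearMap.ker (dZmap A 0)) : ℤ) := by
      exact_mod_cast t3
    have t4' : (Module.finrank ℚ ↥(LinearMap.range (delta0 A)) : ℤ)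
        = (Module.finrank ℚ ↥(Submodule.map (amap A 0) (LinearMap.ker (dYmap A 0))) : ℤ) := by
      exact_mod_cast t4
    linarith
end
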